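/- arXiv:2007.05668 — 6 statements merged into one kernel-verified Lean document; each statement's English description precedes it below -/
import Mathlib

section
/- Equivalence of the nondegenerate and degenerate difference functionals (Lemma 4.2): Fix d ≥ 1, κ > 0, σ = 1/κ. Let a, b : {(μ,ν) ∈ ℝ² : 0 ≤ |ν| < μ} → [0,∞) be smooth, homogeneous of degree 0 and 1 respectively, even in ν, satisfying μ·a(μ,ν) = 2 b(μ,ν), supported in {|ν| ≤ μ/2}, with a = 1 on {|ν| ≤ μ/4}. For states (r_i,v_i), i=1,2, with r_i : ℝ^d → ℝ Lipschitz with constant ≤ L, Ω_i := {r_i > 0}, c·dist(x,∂Ω_i) ≤ r_i(x) ≤ C·dist(x,∂Ω_i) on Ω_i, define the degenerate functional D̃_H := ∫_{Ω₁∩Ω₂} (r₁+r₂)^{σ−1} [ a(r₁+r₂, r₁−r₂)(r₁−r₂)² + κ b(r₁+r₂, r₁−r₂)|v₁−v₂|² ] dx. Then there exist ε₀ > 0 and a constant K (depending only on d, κ, a, b, c, C, L) such that if, for some unit vector N, A := Σ_{i=1,2} ( ‖∇r_i − N‖_{L^∞(Ω_i)} + ‖v_i‖_{Ċ^{1/2}(Ω_i)}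 ) ≤ ε₀, then K^{−1} D̃_H ≤ D_H((r₁,v₁),(r₂,v₂)) ≤ K D̃_H. -/
/-!
Write `μ = r₁ + r₂`, `ν = r₁ - r₂`, `w = |v₁ - v₂|`. Since `μ a = 2 b`, the degenerate density
is `a(μ, ν)` times `μ^{σ-1}(ν² + κ μ w²/2)`, which gives `D̃_H ≲ D_H` at once and
`D_H ≤ 2 D̃_H` on the good region `{4|ν| ≤ μ}`, where `a = 1`.

On the bad region the trick is to move along the common direction `N`. As `∇rᵢ ≈ N`, both
`rᵢ` grow at unit rate along `x + tN`, so `μ` grows at rate `≈ 2` while `ν` and, by the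
`Ċ^{1/2}` bound, `w` barely change. For `t ∈ [2μ(x), 3μ(x)]` the point `x + tN` is therefore
good, and the nondegenerate density at `x` is bounded by a multiple of the one at `x + tN`.
Averaging over `t`, then using Tonelli and translation invariance, bounds the bad part of `D_H`
by the good part: a given point is reached only from times `t` of total `dt/μ`-measure at most
`1`, because `μ` increases along `N`.
-/

open MeasureTheory Set Metric
open scoped NNReal

/-- The nonlinear distance functional
`D_H((r₁,v₁),(r₂,v₂)) = ∫_{Ω₁∩Ω₂} (r₁+r₂)^{σ-1}((r₁-r₂)² + κ(r₁+r₂)|v₁-v₂|²) dx`,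
with `σ = 1/κ`. -/
noncomputable def DH {d : ℕ} (κ : ℝ)
    (r₁ r₂ : EuclideanSpace ℝ (Fin d) → ℝ)
    (v₁ v₂ : EuclideanSpace ℝ (Fin d) → EuclideanSpace ℝ (Fin d)) : ℝ :=
  ∫ x in {x | 0 < r₁ x} ∩ {x | 0 < r₂ x},
    (r₁ x + r₂ x) ^ (1 / κ - 1) *
      ((r₁ x - r₂ x) ^ 2 + κ * (r₁ x + r₂ x) * ‖v₁ x - v₂ x‖ ^ 2)

/-- The degenerate distance functional `D̃_H`, built from the weights `a`, `b`. -/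
noncomputable def DHdeg {d : ℕ} (κ : ℝ) (a b : ℝ → ℝ → ℝ)
    (r₁ r₂ : EuclideanSpace ℝ (Fin d) → ℝ)
    (v₁ v₂ : EuclideanSpace ℝ (Fin d) → EuclideanSpace ℝ (Fin d)) : ℝ :=
  ∫ x in {x | 0 < r₁ x} ∩ {x | 0 < r₂ x},
    (r₁ x + r₂ x) ^ (1 / κ - 1) *
      (a (r₁ x + r₂ x) (r₁ x - r₂ x) * (r₁ x - r₂ x) ^ 2 +
        κ * b (r₁ x + r₂ x) (r₁ x - r₂ x) * ‖v₁ x - v₂ x‖ ^ 2)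

open Filter Topology
open scoped ENNReal

section RayGrowth

lemma abs_sub_sub_le_of_deriv_near_one {φ : ℝ → ℝ} {ε t : ℝ} (ht : 0 ≤ t)
    (hφ : ContinuousOn φ (Icc 0 t))
    (hφ' : ∀ s ∈ Ioo 0 t, DifferentiableAt ℝ φ s ∧ |deriv φ s - 1| ≤ ε) :
    |φ t - φ 0 - t| ≤ ε * t := by
  rcases ht.eq_or_lt with rfl | ht
  · simp
  obtain ⟨s, hs, hslope⟩ := exists_deriv_eq_slope φ ht hφ
    fun s hs => (hφ' s hs).1.differentiableWithinAt
  have hφt : φ t - φ 0 - t = (deriv φ s - 1) * t := by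
    rw [hslope]; field_simp; ring
  rw [hφt, abs_mul, abs_of_pos ht]
  exact mul_le_mul_of_nonneg_right (hφ' s hs).2 ht.le

lemma pos_and_abs_sub_sub_le_of_deriv_near_one {φ : ℝ → ℝ} {ε t : ℝ} (hε : ε ≤ 1)
    (hφ : Continuous φ) (hφ' : ∀ s, 0 < φ s → DifferentiableAt ℝ φ s ∧ |deriv φ s - 1| ≤ ε)
    (h0 : 0 < φ 0) (ht : 0 ≤ t) :
    0 < φ t ∧ |φ t - φ 0 - t| ≤ ε * t := by
  have hpos : ∀ s, 0 ≤ s → 0 < φ s := by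
    intro s hs
    by_contra! hneg
    -- at the first zero `T`, the mean value theorem on `[0, T]` gives `φ 0 ≤ φ T`
    obtain ⟨T, ⟨⟨hT0, hTs⟩, hφT⟩, hTmin⟩ :=
      (isCompact_Icc.inter_right (isClosed_le hφ continuous_const)).exists_isLeast
        ⟨s, ⟨hs, le_rfl⟩, hneg⟩
    have hbefore : ∀ u ∈ Ioo 0 T, 0 < φ u := fun u hu => by
      by_contra! hu'
      exact absurd (hTmin ⟨⟨hu.1.le, hu.2.le.trans hTs⟩, hu'⟩) (not_le.2 hu.2)
    have h := abs_sub_sub_le_of_deriv_near_one hT0 hφ.continuousOn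
      fun u hu => hφ' u (hbefore u hu)
    nlinarith [(abs_le.1 h).1, show φ T ≤ 0 from hφT]
  exact ⟨hpos t ht, abs_sub_sub_le_of_deriv_near_one ht hφ.continuousOn
    fun s hs => hφ' s (hpos s hs.1.le)⟩

variable {E : Type*} [NormedAddCommGroup E] [InnerProductSpace ℝ E] [CompleteSpace E]

lemma abs_fderiv_sub_one_le_of_gradient {r : E → ℝ} {N y : E} (hN : ‖N‖ = 1) {ε : ℝ}
    (hε : ε < 1) (hgrad : ‖gradient r y - N‖ ≤ ε) :
    DifferentiableAt ℝ r y ∧ |fderiv ℝ r y N - 1| ≤ ε := by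
  have hdiff : DifferentiableAt ℝ r y := by
    by_contra hnd
    rw [gradient_eq_zero_of_not_differentiableAt hnd, zero_sub, norm_neg, hN] at hgrad
    linarith
  refine ⟨hdiff, ?_⟩
  have hinner : fderiv ℝ r y N - 1 = inner ℝ (gradient r y - N) N := by
    rw [inner_sub_left, real_inner_self_eq_norm_sq, hN, inner_gradient_left]; ring
  rw [hinner]
  calc |inner ℝ (gradient r y - N) N| ≤ ‖gradient r y - N‖ * ‖N‖ := abs_real_inner_le_norm _ _
    _ ≤ ε := by rwa [hN, mul_one]

lemma pos_and_abs_sub_sub_le_of_gradient {r : E → ℝ} (hr : Continuous r) {N : E}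
    (hN : ‖N‖ = 1) {ε : ℝ} (hε : ε < 1) (hgrad : ∀ y, 0 < r y → ‖gradient r y - N‖ ≤ ε)
    {x : E} (hx : 0 < r x) {t : ℝ} (ht : 0 ≤ t) :
    0 < r (x + t • N) ∧ |r (x + t • N) - r x - t| ≤ ε * t := by
  have hφ' (s : ℝ) (hs : 0 < r (x + s • N)) : DifferentiableAt ℝ (fun s : ℝ => r (x + s • N)) s ∧
      |deriv (fun s : ℝ => r (x + s • N)) s - 1| ≤ ε := by
    obtain ⟨hdiff, hbound⟩ := abs_fderiv_sub_one_le_of_gradient hN hε (hgrad _ hs)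
    have hline : HasDerivAt (fun s : ℝ => x + s • N) N s := by
      simpa using ((hasDerivAt_id s).smul_const N).const_add x
    have hcomp : HasDerivAt (fun s : ℝ => r (x + s • N)) (fderiv ℝ r (x + s • N) N) s :=
      hdiff.hasFDerivAt.comp_hasDerivAt s hline
    exact ⟨hcomp.differentiableAt, by rwa [hcomp.deriv]⟩
  simpa using pos_and_abs_sub_sub_le_of_deriv_near_one hε.le (by fun_prop) hφ' (by simpa) ht

lemma pair_estimates_along_ray {F : Type*} [NormedAddCommGroup F] {r₁ r₂ : E → ℝ}
    {v₁ v₂ : E → F} {N : E} {ε : ℝ}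
    (hr₁ : Continuous r₁) (hr₂ : Continuous r₂) (hN : ‖N‖ = 1) (hε : ε < 1)
    (hgrad₁ : ∀ x, 0 < r₁ x → ‖gradient r₁ x - N‖ ≤ ε)
    (hgrad₂ : ∀ x, 0 < r₂ x → ‖gradient r₂ x - N‖ ≤ ε)
    (hv₁ : ∀ x, 0 < r₁ x → ∀ y, 0 < r₁ y → ‖v₁ x - v₁ y‖ ≤ ε * √‖x - y‖)
    (hv₂ : ∀ x, 0 < r₂ x → ∀ y, 0 < r₂ y → ‖v₂ x - v₂ y‖ ≤ ε * √‖x - y‖)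
    {x : E} (hx : x ∈ {x | 0 < r₁ x} ∩ {x | 0 < r₂ x}) {t : ℝ} (ht : 0 ≤ t) :
    x + t • N ∈ {x | 0 < r₁ x} ∩ {x | 0 < r₂ x} ∧
      |r₁ (x + t • N) + r₂ (x + t • N) - (r₁ x + r₂ x) - 2 * t| ≤ 2 * ε * t ∧
      |r₁ (x + t • N) - r₂ (x + t • N) - (r₁ x - r₂ x)| ≤ 2 * ε * t ∧
      ‖v₁ x - v₂ x‖ ≤ ‖v₁ (x + t • N) - v₂ (x + t • N)‖ + 2 * ε * √t := by
  obtain ⟨hy₁, h₁⟩ := pos_and_abs_sub_sub_le_of_gradient hr₁ hN hε hgrad₁ hx.1 ht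
  obtain ⟨hy₂, h₂⟩ := pos_and_abs_sub_sub_le_of_gradient hr₂ hN hε hgrad₂ hx.2 ht
  have hdist : ‖x - (x + t • N)‖ = t := by
    rw [sub_add_cancel_left, norm_neg, norm_smul, hN, mul_one, Real.norm_of_nonneg ht]
  refine ⟨⟨hy₁, hy₂⟩, ?_, ?_, ?_⟩
  · rw [abs_le] at h₁ h₂ ⊢; constructor <;> linarith
  · rw [abs_le] at h₁ h₂ ⊢; constructor <;> linarith
  · have hw₁ := hv₁ x hx.1 _ hy₁
    have hw₂ := hv₂ x hx.2 _ hy₂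
    rw [hdist] at hw₁ hw₂
    calc ‖v₁ x - v₂ x‖
        = ‖(v₁ (x + t • N) - v₂ (x + t • N)) + (v₁ x - v₁ (x + t • N))
            - (v₂ x - v₂ (x + t • N))‖ := by congr 1; abel
      _ ≤ ‖v₁ (x + t • N) - v₂ (x + t • N)‖ + ‖v₁ x - v₁ (x + t • N)‖ + ‖v₂ x - v₂ (x + t • N)‖ :=
          norm_sub_le_of_le (norm_add_le _ _) le_rfl
      _ ≤ ‖v₁ (x + t • N) - v₂ (x + t • N)‖ + 2 * ε * √t := by linarith

end RayGrowth

lemma continuousOn_of_norm_sub_le_mul_sqrt {E F : Type*} [SeminormedAddCommGroup E]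
    [SeminormedAddCommGroup F] {f : E → F} {s : Set E} {C : ℝ}
    (hf : ∀ x ∈ s, ∀ y ∈ s, ‖f x - f y‖ ≤ C * √‖x - y‖) : ContinuousOn f s := by
  intro x hx
  rw [ContinuousWithinAt, tendsto_iff_norm_sub_tendsto_zero]
  refine squeeze_zero' (Eventually.of_forall fun _ => norm_nonneg _)
    (eventually_nhdsWithin_of_forall fun y hy => hf y hy x hx) ?_
  have h : Tendsto (fun y => C * √‖y - x‖) (𝓝 x) (𝓝 (C * √‖x - x‖)) := by
    apply Continuous.tendsto; fun_prop
  simpa using h.mono_left nhdsWithin_le_nhds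

lemma rpow_le_rpow_mul_of_le_of_le {x y c p : ℝ} (hx : 0 < x) (hxy : x ≤ y) (hyc : y ≤ c * x) :
    x ^ p ≤ c ^ |p| * y ^ p := by
  have hc : 1 ≤ c := le_of_mul_le_mul_right (by linarith) hx
  rcases le_total 0 p with hp | hp
  · rw [abs_of_nonneg hp]
    calc x ^ p ≤ y ^ p := Real.rpow_le_rpow hx.le hxy hp
      _ ≤ c ^ p * y ^ p :=
          le_mul_of_one_le_left (Real.rpow_nonneg (by linarith) _) (Real.one_le_rpow hc hp)
  · rw [abs_of_nonpos hp]
    calc x ^ p = c ^ (-p) * (c * x) ^ p := by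
          rw [Real.mul_rpow (by positivity) hx.le, ← mul_assoc, ← Real.rpow_add (by positivity)]
          simp
      _ ≤ c ^ (-p) * y ^ p := mul_le_mul_of_nonneg_left
          (Real.rpow_le_rpow_of_nonpos (hx.trans_le hxy) hyc hp) (by positivity)

/-- The integrands of `DH` and `DHdeg` in the variables `μ = r₁ + r₂`, `ν = r₁ - r₂` and
`w = ‖v₁ - v₂‖`. -/
noncomputable def nondegDensity (κ μ ν w : ℝ) : ℝ := μ ^ (1 / κ - 1) * (ν ^ 2 + κ * μ * w ^ 2)

noncomputable def degDensity (κ : ℝ) (a b : ℝ → ℝ → ℝ) (μ ν w : ℝ) : ℝ :=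
  μ ^ (1 / κ - 1) * (a μ ν * ν ^ 2 + κ * b μ ν * w ^ 2)

section Densities

variable {κ μ ν w : ℝ} {a b : ℝ → ℝ → ℝ}

lemma nondegDensity_nonneg (hκ : 0 ≤ κ) (hμ : 0 ≤ μ) : 0 ≤ nondegDensity κ μ ν w := by
  unfold nondegDensity; positivity

lemma degDensity_eq (hab : μ * a μ ν = 2 * b μ ν) :
    degDensity κ a b μ ν w = a μ ν * (μ ^ (1 / κ - 1) * (ν ^ 2 + κ * (μ / 2) * w ^ 2)) := by
  unfold degDensity
  rw [← show μ * a μ ν / 2 = b μ ν by linarith]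
  ring

lemma degDensity_nonneg (hκ : 0 ≤ κ) (hμ : 0 < μ) (hab : μ * a μ ν = 2 * b μ ν)
    (ha : 0 ≤ a μ ν) : 0 ≤ degDensity κ a b μ ν w := by
  rw [degDensity_eq hab]; positivity

lemma degDensity_le_mul_nondegDensity {M : ℝ} (hκ : 0 ≤ κ) (hμ : 0 < μ)
    (hab : μ * a μ ν = 2 * b μ ν) (ha : 0 ≤ a μ ν) (haM : a μ ν ≤ M) :
    degDensity κ a b μ ν w ≤ M * nondegDensity κ μ ν w := by
  rw [degDensity_eq hab]
  unfold nondegDensity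
  have hκμw : 0 ≤ κ * μ * w ^ 2 := by positivity
  have hinner : ν ^ 2 + κ * (μ / 2) * w ^ 2 ≤ ν ^ 2 + κ * μ * w ^ 2 := by linarith
  exact mul_le_mul haM (by gcongr) (by positivity) (ha.trans haM)

lemma nondegDensity_le_two_mul_degDensity (hμ : 0 < μ)
    (hab : μ * a μ ν = 2 * b μ ν) (ha : a μ ν = 1) :
    nondegDensity κ μ ν w ≤ 2 * degDensity κ a b μ ν w := by
  rw [degDensity_eq hab, ha]
  unfold nondegDensity
  have := Real.rpow_nonneg hμ.le (1 / κ - 1)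
  nlinarith [mul_nonneg this (sq_nonneg ν)]

end Densities

lemma nondegDensity_le_of_near_ray {κ ε μ₀ ν₀ w₀ μ₁ ν₁ w₁ t : ℝ} (hκ : 0 ≤ κ) (hε : ε ≤ 1 / 100)
    (hμ₀ : 0 < μ₀) (hν₀ : |ν₀| ≤ μ₀) (hbad : μ₀ < 4 * |ν₀|) (ht : t ∈ Icc (2 * μ₀) (3 * μ₀))
    (hμ₁ : |μ₁ - μ₀ - 2 * t| ≤ 2 * ε * t) (hν₁ : |ν₁ - ν₀| ≤ 2 * ε * t)
    (hw₀ : 0 ≤ w₀) (hw : w₀ ≤ w₁ + 2 * ε * √t) :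
    4 * |ν₁| ≤ μ₁ ∧
      nondegDensity κ μ₀ ν₀ w₀ ≤ 8 ^ |1 / κ - 1| * (28 + κ) * nondegDensity κ μ₁ ν₁ w₁ := by
  obtain ⟨ht₁, ht₂⟩ := ht
  have hεt : 2 * ε * t ≤ t / 50 := by nlinarith
  have hw' : w₀ ≤ w₁ + √t / 50 := by nlinarith [Real.sqrt_nonneg t]
  obtain ⟨hμ₁lo, hμ₁hi⟩ := abs_le.1 hμ₁
  have hν₁hi : |ν₁| ≤ |ν₀| + t / 50 := by
    have := abs_sub_abs_le_abs_sub ν₁ ν₀; linarith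
  have hν₁lo : |ν₀| - t / 50 ≤ |ν₁| := by
    have := abs_sub_abs_le_abs_sub ν₀ ν₁; rw [abs_sub_comm] at this; linarith
  refine ⟨by linarith, ?_⟩
  have hμ₀sq : μ₀ ^ 2 ≤ 28 * ν₁ ^ 2 := by
    nlinarith [sq_abs ν₁, abs_nonneg ν₁]
  have hν₀sq : ν₀ ^ 2 ≤ 28 * ν₁ ^ 2 := by
    nlinarith [sq_abs ν₀, abs_nonneg ν₀]
  have hw₀sq : w₀ ^ 2 ≤ 2 * w₁ ^ 2 + 6 * μ₀ / 2500 := by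
    have hsq : √t ^ 2 = t := Real.sq_sqrt (by linarith)
    nlinarith [sq_nonneg (w₁ - √t / 50)]
  have hinner : ν₀ ^ 2 + κ * μ₀ * w₀ ^ 2 ≤ (28 + κ) * (ν₁ ^ 2 + κ * μ₁ * w₁ ^ 2) := by
    have h1 : κ * μ₀ * w₀ ^ 2 ≤ κ * μ₀ * (2 * w₁ ^ 2 + 6 * μ₀ / 2500) := by gcongr
    have h2 : κ * μ₀ * w₁ ^ 2 ≤ κ * μ₁ * w₁ ^ 2 := by gcongr; linarith
    have h3 : κ * μ₀ ^ 2 ≤ κ * (28 * ν₁ ^ 2) := by gcongr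
    have hκμw : 0 ≤ κ * μ₁ * w₁ ^ 2 := mul_nonneg (mul_nonneg hκ (by linarith)) (sq_nonneg w₁)
    nlinarith [mul_nonneg hκ (sq_nonneg ν₁), mul_nonneg hκ hκμw]
  have hrpow : μ₀ ^ (1 / κ - 1) ≤ 8 ^ |1 / κ - 1| * μ₁ ^ (1 / κ - 1) :=
    rpow_le_rpow_mul_of_le_of_le hμ₀ (by linarith) (by linarith)
  calc nondegDensity κ μ₀ ν₀ w₀
      ≤ (8 ^ |1 / κ - 1| * μ₁ ^ (1 / κ - 1)) * ((28 + κ) * (ν₁ ^ 2 + κ * μ₁ * w₁ ^ 2)) :=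
        mul_le_mul hrpow hinner (by positivity)
          (mul_nonneg (by positivity) (Real.rpow_nonneg (by linarith) _))
    _ = 8 ^ |1 / κ - 1| * (28 + κ) * nondegDensity κ μ₁ ν₁ w₁ := by
        unfold nondegDensity; ring

lemma exists_le_of_isHomogeneous_zero {a : ℝ → ℝ → ℝ}
    (ha : ContinuousOn (fun p : ℝ × ℝ => a p.1 p.2) {p | |p.2| < p.1})
    (ha_hom : ∀ lam > (0:ℝ), ∀ μ ν : ℝ, |ν| < μ → a (lam * μ) (lam * ν) = a μ ν)
    (ha_supp : ∀ μ ν : ℝ, |ν| < μ → μ / 2 < |ν| → a μ ν = 0) :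
    ∃ M ≥ (0:ℝ), ∀ μ ν : ℝ, |ν| < μ → a μ ν ≤ M := by
  have hslice : ContinuousOn (fun s => a 1 s) (Icc (-(1/2)) (1/2)) :=
    ha.comp (continuous_const.prodMk continuous_id).continuousOn fun s hs => by
      change |s| < 1; rw [abs_lt]; constructor <;> linarith [hs.1, hs.2]
  obtain ⟨C, hC⟩ := isCompact_Icc.exists_bound_of_continuousOn hslice
  refine ⟨max C 0, le_max_right _ _, fun μ ν hν => ?_⟩
  have hμ : 0 < μ := (abs_nonneg ν).trans_lt hν
  have hs : |ν / μ| < 1 := by rwa [abs_div, abs_of_pos hμ, div_lt_one hμ]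
  have h1 : a μ ν = a 1 (ν / μ) := by
    simpa [mul_div_cancel₀ ν hμ.ne'] using ha_hom μ hμ 1 (ν / μ) (by simpa using hs)
  rw [h1]
  rcases le_or_gt |ν / μ| (1/2) with h | h
  · exact (Real.le_norm_self _).trans ((hC _ (abs_le.1 h)).trans (le_max_left _ _))
  · rw [ha_supp 1 _ (by simpa using hs) h]
    exact le_max_right _ _

lemma integral_le_and_le_of_lintegral_le {α : Type*} [MeasurableSpace α] {ρ : Measure α}
    {F G : α → ℝ} (hF : 0 ≤ᵐ[ρ] F) (hG : 0 ≤ᵐ[ρ] G) (hFm : AEStronglyMeasurable F ρ)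
    (hGm : AEStronglyMeasurable G ρ) {K : ℝ} (hK : 0 < K)
    (hFG : ∫⁻ x, ENNReal.ofReal (F x) ∂ρ ≤ ENNReal.ofReal K * ∫⁻ x, ENNReal.ofReal (G x) ∂ρ)
    (hGF : ∫⁻ x, ENNReal.ofReal (G x) ∂ρ ≤ ENNReal.ofReal K * ∫⁻ x, ENNReal.ofReal (F x) ∂ρ) :
    K⁻¹ * ∫ x, G x ∂ρ ≤ ∫ x, F x ∂ρ ∧ ∫ x, F x ∂ρ ≤ K * ∫ x, G x ∂ρ := by
  rw [integral_eq_lintegral_of_nonneg_ae hF hFm, integral_eq_lintegral_of_nonneg_ae hG hGm]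
  set IF := ∫⁻ x, ENNReal.ofReal (F x) ∂ρ
  set IG := ∫⁻ x, ENNReal.ofReal (G x) ∂ρ
  -- the two integrals are finite together, otherwise both Bochner integrals vanish
  by_cases hIF : IF = ∞
  · have hIG : IG = ∞ := by
      by_contra hIG
      exact (ENNReal.mul_ne_top ENNReal.ofReal_ne_top hIG) (top_le_iff.1 (hIF ▸ hFG))
    simp [hIF, hIG]
  have hIG : IG ≠ ∞ := ne_top_of_le_ne_top (ENNReal.mul_ne_top ENNReal.ofReal_ne_top hIF) hGF
  have hFG' := ENNReal.toReal_mono (ENNReal.mul_ne_top ENNReal.ofReal_ne_top hIG) hFG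
  have hGF' := ENNReal.toReal_mono (ENNReal.mul_ne_top ENNReal.ofReal_ne_top hIF) hGF
  rw [ENNReal.toReal_mul, ENNReal.toReal_ofReal hK.le] at hFG' hGF'
  refine ⟨?_, hFG'⟩
  rw [inv_mul_le_iff₀ hK]
  exact hGF'

lemma ContinuousOn.measurable_indicator {α β : Type*} [TopologicalSpace α] [MeasurableSpace α]
    [OpensMeasurableSpace α] [TopologicalSpace β] [MeasurableSpace β] [BorelSpace β] [Zero β]
    {f : α → β} {s : Set α} (hf : ContinuousOn f s) (hs : MeasurableSet s) :
    Measurable (s.indicator f) := by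
  classical
  simpa only [piecewise_eq_indicator] using hf.measurable_piecewise (g := 0) continuousOn_const hs

lemma setLIntegral_ofReal_le_mul {α : Type*} [MeasurableSpace α] {ρ : Measure α} {s : Set α}
    (hs : MeasurableSet s) {F G : α → ℝ} {K : ℝ} (hK : 0 ≤ K) (h : ∀ x ∈ s, F x ≤ K * G x) :
    ∫⁻ x in s, ENNReal.ofReal (F x) ∂ρ ≤ ENNReal.ofReal K * ∫⁻ x in s, ENNReal.ofReal (G x) ∂ρ := by
  rw [← lintegral_const_mul' _ _ ENNReal.ofReal_ne_top]
  exact setLIntegral_mono' hs fun x hx => by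
    rw [← ENNReal.ofReal_mul hK]
    exact ENNReal.ofReal_le_ofReal (h x hx)

section Transport

noncomputable def bandWeight {E : Type*} (B : Set E) (ℓ : E → ℝ) : E × ℝ → ℝ≥0∞ :=
  {p | p.1 ∈ B ∧ p.2 ∈ Icc (2 * ℓ p.1) (3 * ℓ p.1)}.indicator fun p => (ENNReal.ofReal (ℓ p.1))⁻¹

lemma bandWeight_of_mem {E : Type*} {B : Set E} {ℓ : E → ℝ} {x : E} (hx : x ∈ B) (t : ℝ) :
    bandWeight B ℓ (x, t) =
      (Icc (2 * ℓ x) (3 * ℓ x)).indicator (fun _ => (ENNReal.ofReal (ℓ x))⁻¹) t := by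
  simp only [bandWeight, indicator, mem_ofPred_eq, hx, true_and]

lemma measurable_bandWeight {E : Type*} [MeasurableSpace E] {B : Set E} (hB : MeasurableSet B)
    {ℓ : E → ℝ} (hℓ : Measurable ℓ) : Measurable (bandWeight B ℓ) :=
  (ENNReal.measurable_ofReal.comp (hℓ.comp measurable_fst)).inv.indicator <|
    (hB.preimage measurable_fst).inter
      ((measurableSet_le ((hℓ.comp measurable_fst).const_mul 2) measurable_snd).inter
        (measurableSet_le measurable_snd ((hℓ.comp measurable_fst).const_mul 3)))

lemma lintegral_bandWeight {E : Type*} {B : Set E} {ℓ : E → ℝ} {x : E} (hx : x ∈ B)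
    (hℓ : 0 < ℓ x) :
    ∫⁻ t, bandWeight B ℓ (x, t) = 1 := by
  simp_rw [bandWeight_of_mem hx]
  rw [lintegral_indicator_const measurableSet_Icc, Real.volume_Icc,
    show 3 * ℓ x - 2 * ℓ x = ℓ x by ring]
  exact ENNReal.inv_mul_cancel (by simpa using hℓ) ENNReal.ofReal_ne_top

variable {E : Type*} [NormedAddCommGroup E] [NormedSpace ℝ E]

lemma lintegral_bandWeight_sub_smul_le_one {B : Set E} {ℓ : E → ℝ} {N : E}
    (hℓ : ∀ x ∈ B, 0 < ℓ x) (hgrow : ∀ x ∈ B, ∀ s, 0 ≤ s → ℓ x + s ≤ ℓ (x + s • N)) (y : E) :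
    ∫⁻ t, bandWeight B ℓ (y - t • N, t) ≤ 1 := by
  set T := {t | y - t • N ∈ B ∧ t ∈ Icc (2 * ℓ (y - t • N)) (3 * ℓ (y - t • N))}
  refine (lintegral_indicator_le (fun t => (ENNReal.ofReal (ℓ (y - t • N)))⁻¹) T).trans ?_
  rcases T.eq_empty_or_nonempty with hT | ⟨t₀, ht₀B, ht₀⟩
  · simp [hT]
  have ht₀pos : 0 < t₀ := by linarith [hℓ _ ht₀B, ht₀.1]
  -- `ℓ` grows along `N`, so all times in `T` are comparable
  have hcomp : ∀ t ∈ T, ∀ t' ∈ T, t ≤ t' → 8 * t' ≤ 9 * t := by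
    rintro t ⟨-, ht⟩ t' ⟨ht'B, ht'⟩ htt'
    have h := hgrow _ ht'B (t' - t) (by linarith)
    rw [show y - t' • N + (t' - t) • N = y - t • N by rw [sub_smul]; abel] at h
    linarith [ht.1, ht'.2]
  have hTsub : T ⊆ Icc (8 / 9 * t₀) (9 / 8 * t₀) := by
    intro t ht
    have htpos : 0 < t := by linarith [hℓ _ ht.1, ht.2.1]
    rcases le_total t t₀ with h | h
    · have := hcomp t ht t₀ ⟨ht₀B, ht₀⟩ h; constructor <;> linarith
    · have := hcomp t₀ ⟨ht₀B, ht₀⟩ t ht h; constructor <;> linarith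
  have hbound : ∀ t ∈ T, (ENNReal.ofReal (ℓ (y - t • N)))⁻¹ ≤ ENNReal.ofReal (27 / (8 * t₀)) := by
    intro t ht
    have hℓt := hℓ _ ht.1
    rw [← ENNReal.ofReal_inv_of_pos hℓt]
    apply ENNReal.ofReal_le_ofReal
    rw [inv_le_comm₀ hℓt (by positivity), inv_div]
    linarith [ht.2.2, (hTsub ht).1]
  calc ∫⁻ t in T, (ENNReal.ofReal (ℓ (y - t • N)))⁻¹
      ≤ ∫⁻ _ in T, ENNReal.ofReal (27 / (8 * t₀)) := setLIntegral_mono measurable_const hbound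
    _ ≤ ∫⁻ _ in Icc (8 / 9 * t₀) (9 / 8 * t₀), ENNReal.ofReal (27 / (8 * t₀)) :=
        lintegral_mono_set hTsub
    _ = ENNReal.ofReal (459 / 576) := by
        rw [setLIntegral_const, Real.volume_Icc, ← ENNReal.ofReal_mul (by positivity)]
        congr 1
        field_simp
        ring
    _ ≤ 1 := ENNReal.ofReal_le_one.2 (by norm_num)

variable [MeasurableSpace E] [BorelSpace E] [SecondCountableTopology E] {ρ : Measure E} [SFinite ρ]
  [ρ.IsAddRightInvariant]

lemma setLIntegral_le_lintegral_of_le_shift {B : Set E} (hB : MeasurableSet B) {ℓ : E → ℝ}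
    (hℓm : Measurable ℓ) (hℓ : ∀ x ∈ B, 0 < ℓ x) {N : E}
    (hgrow : ∀ x ∈ B, ∀ s, 0 ≤ s → ℓ x + s ≤ ℓ (x + s • N)) {f g : E → ℝ≥0∞} (hg : Measurable g)
    (hfg : ∀ x ∈ B, ∀ t ∈ Icc (2 * ℓ x) (3 * ℓ x), f x ≤ g (x + t • N)) :
    ∫⁻ x in B, f x ∂ρ ≤ ∫⁻ y, g y ∂ρ := by
  set H : E × ℝ → ℝ≥0∞ := fun p => g (p.1 + p.2 • N) * bandWeight B ℓ p
  have hw := measurable_bandWeight hB hℓm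
  have hH : Measurable H := (hg.comp (by fun_prop)).mul hw
  have hfH : ∀ x ∈ B, f x ≤ ∫⁻ t, H (x, t) := by
    intro x hx
    have hwx : Measurable fun t => bandWeight B ℓ (x, t) := hw.comp measurable_prodMk_left
    calc f x = ∫⁻ t, f x * bandWeight B ℓ (x, t) := by
          rw [lintegral_const_mul _ hwx, lintegral_bandWeight hx (hℓ x hx), mul_one]
      _ ≤ ∫⁻ t, H (x, t) := lintegral_mono fun t => by
          by_cases ht : t ∈ Icc (2 * ℓ x) (3 * ℓ x)
          · exact mul_le_mul_left (hfg x hx t ht) _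
          · simp only [bandWeight_of_mem hx, indicator_of_notMem ht, mul_zero, zero_le]
  calc ∫⁻ x in B, f x ∂ρ ≤ ∫⁻ x in B, (∫⁻ t, H (x, t)) ∂ρ := setLIntegral_mono' hB hfH
    _ ≤ ∫⁻ x, (∫⁻ t, H (x, t)) ∂ρ := setLIntegral_le_lintegral _ _
    _ = ∫⁻ t, ∫⁻ x, H (x, t) ∂ρ := lintegral_lintegral_swap hH.aemeasurable
    _ = ∫⁻ t, ∫⁻ y, H (y - t • N, t) ∂ρ := by
        congr 1 with t
        rw [← lintegral_add_right_eq_self (fun y => H (y - t • N, t)) (t • N)]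
        simp only [add_sub_cancel_right]
    _ = ∫⁻ y, (∫⁻ t, H (y - t • N, t)) ∂ρ := lintegral_lintegral_swap
        (hH.comp (Continuous.measurable (by fun_prop) :
          Measurable fun p : ℝ × E => (p.2 - p.1 • N, p.1))).aemeasurable
    _ ≤ ∫⁻ y, g y ∂ρ := lintegral_mono fun y => by
        have hwy : Measurable fun t => bandWeight B ℓ (y - t • N, t) := hw.comp (by fun_prop)
        simp only [H, sub_add_cancel]
        rw [lintegral_const_mul _ hwy]
        exact mul_le_of_le_one_right' (lintegral_bandWeight_sub_smul_le_one hℓ hgrow y)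

lemma setLIntegral_le_two_mul_of_le_shift {U : Set E} (hU : MeasurableSet U) {ℓ : E → ℝ}
    (hℓm : Measurable ℓ) (hℓ : ∀ x ∈ U, 0 < ℓ x) {N : E}
    (hgrow : ∀ x ∈ U, ∀ s, 0 ≤ s → ℓ x + s ≤ ℓ (x + s • N)) {V : Set E} (hV : MeasurableSet V)
    {f g : E → ℝ≥0∞} (hg : Measurable g) (hfV : ∀ x ∈ U ∩ V, f x ≤ g x)
    (hfU : ∀ x ∈ U \ V, ∀ t ∈ Icc (2 * ℓ x) (3 * ℓ x), f x ≤ g (x + t • N)) :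
    ∫⁻ x in U, f x ∂ρ ≤ 2 * ∫⁻ x, g x ∂ρ := by
  rw [← lintegral_inter_add_sdiff f U hV, two_mul]
  exact add_le_add ((setLIntegral_mono' (hU.inter hV) hfV).trans (setLIntegral_le_lintegral _ _))
    (setLIntegral_le_lintegral_of_le_shift (hU.diff hV) hℓm (fun x hx => hℓ x hx.1)
      (fun x hx => hgrow x hx.1) hg hfU)

lemma setLIntegral_nondegDensity_le {U : Set E} (hU : MeasurableSet U) {m n w G : E → ℝ}
    (hm : Measurable m) (hn : Measurable n) (hG : ContinuousOn G U) {N : E} {κ ε : ℝ}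
    (hκ : 0 ≤ κ) (hε : ε ≤ 1 / 100) (hnm : ∀ x ∈ U, |n x| < m x) (hw : ∀ x ∈ U, 0 ≤ w x)
    (hray : ∀ x ∈ U, ∀ t, 0 ≤ t → x + t • N ∈ U ∧ |m (x + t • N) - m x - 2 * t| ≤ 2 * ε * t ∧
      |n (x + t • N) - n x| ≤ 2 * ε * t ∧ w x ≤ w (x + t • N) + 2 * ε * √t)
    (hgood : ∀ x ∈ U, 4 * |n x| ≤ m x → nondegDensity κ (m x) (n x) (w x) ≤ 2 * G x) :
    ∫⁻ x in U, ENNReal.ofReal (nondegDensity κ (m x) (n x) (w x)) ∂ρ ≤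
      ENNReal.ofReal (4 * (8 ^ |1 / κ - 1| * (28 + κ))) * ∫⁻ x in U, ENNReal.ofReal (G x) ∂ρ := by
  have hK₁ : 1 ≤ 8 ^ |1 / κ - 1| * (28 + κ) :=
    one_le_mul_of_one_le_of_one_le (Real.one_le_rpow (by norm_num) (abs_nonneg _)) (by linarith)
  generalize hK : 8 ^ |1 / κ - 1| * (28 + κ) = K₁ at hK₁ ⊢
  have hmpos : ∀ x ∈ U, 0 < m x := fun x hx => (abs_nonneg _).trans_lt (hnm x hx)
  have hgood' : ∀ x ∈ U, 4 * |n x| ≤ m x → nondegDensity κ (m x) (n x) (w x) ≤ 2 * K₁ * G x :=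
    fun x hx h4 => by
      have h := hgood x hx h4
      nlinarith [nondegDensity_nonneg (ν := n x) (w := w x) hκ (hmpos x hx).le]
  calc ∫⁻ x in U, ENNReal.ofReal (nondegDensity κ (m x) (n x) (w x)) ∂ρ
      ≤ 2 * ∫⁻ x, U.indicator (fun x => ENNReal.ofReal (2 * K₁ * G x)) x ∂ρ := by
        refine setLIntegral_le_two_mul_of_le_shift hU hm hmpos (N := N) ?_
          (measurableSet_le (hn.abs.const_mul 4) hm)
          ((ENNReal.continuous_ofReal.comp_continuousOn
            (continuousOn_const.mul hG)).measurable_indicator hU)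
          (fun x ⟨hxU, hxV⟩ => ?_) (fun x ⟨hxU, hxV⟩ t ht => ?_)
        · intro x hx s hs
          have := (abs_le.1 (hray x hx s hs).2.1).1
          nlinarith
        · rw [indicator_of_mem hxU]
          exact ENNReal.ofReal_le_ofReal (hgood' x hxU hxV)
        · have ht0 : 0 ≤ t := by linarith [ht.1, hmpos x hxU]
          obtain ⟨hyU, hmy, hny, hwy⟩ := hray x hxU t ht0
          obtain ⟨hgoody, hle⟩ := nondegDensity_le_of_near_ray hκ hε (hmpos x hxU)
            (hnm x hxU).le (not_le.1 hxV) ht hmy hny (hw x hxU) hwy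
          rw [hK] at hle
          rw [indicator_of_mem hyU]
          refine ENNReal.ofReal_le_ofReal (hle.trans ?_)
          linarith [mul_le_mul_of_nonneg_left (hgood _ hyU hgoody) (by linarith : 0 ≤ K₁)]
    _ = ENNReal.ofReal (4 * K₁) * ∫⁻ x in U, ENNReal.ofReal (G x) ∂ρ := by
        rw [lintegral_indicator hU]
        simp_rw [ENNReal.ofReal_mul (by positivity : (0:ℝ) ≤ 2 * K₁)]
        rw [lintegral_const_mul' _ _ ENNReal.ofReal_ne_top, ← mul_assoc]
        congr 1
        rw [show 4 * K₁ = 2 * (2 * K₁) by ring]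
        simp only [ENNReal.ofReal_mul zero_le_two, ENNReal.ofReal_ofNat]

end Transport

theorem DHdeg_le_DH_and_DH_le_DHdeg {d : ℕ} {κ : ℝ} (hκ : 0 < κ) {a b : ℝ → ℝ → ℝ}
    (ha : ContinuousOn (fun p : ℝ × ℝ => a p.1 p.2) {p | |p.2| < p.1})
    (ha_nonneg : ∀ μ ν : ℝ, |ν| < μ → 0 ≤ a μ ν)
    (hab : ∀ μ ν : ℝ, |ν| < μ → μ * a μ ν = 2 * b μ ν)
    (ha_one : ∀ μ ν : ℝ, 0 < μ → |ν| ≤ μ / 4 → a μ ν = 1)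
    {M K : ℝ} (haM : ∀ μ ν : ℝ, |ν| < μ → a μ ν ≤ M)
    (hK : 4 * (8 ^ |1 / κ - 1| * (28 + κ)) ≤ K) (hMK : M ≤ K)
    {r₁ r₂ : EuclideanSpace ℝ (Fin d) → ℝ}
    {v₁ v₂ : EuclideanSpace ℝ (Fin d) → EuclideanSpace ℝ (Fin d)} {N : EuclideanSpace ℝ (Fin d)}
    {ε : ℝ} (hε : ε ≤ 1 / 100) (hr₁ : Continuous r₁) (hr₂ : Continuous r₂) (hN : ‖N‖ = 1)
    (hgrad₁ : ∀ x, 0 < r₁ x → ‖gradient r₁ x - N‖ ≤ ε)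
    (hgrad₂ : ∀ x, 0 < r₂ x → ‖gradient r₂ x - N‖ ≤ ε)
    (hv₁ : ∀ x, 0 < r₁ x → ∀ y, 0 < r₁ y → ‖v₁ x - v₁ y‖ ≤ ε * √‖x - y‖)
    (hv₂ : ∀ x, 0 < r₂ x → ∀ y, 0 < r₂ y → ‖v₂ x - v₂ y‖ ≤ ε * √‖x - y‖) :
    K⁻¹ * DHdeg κ a b r₁ r₂ v₁ v₂ ≤ DH κ r₁ r₂ v₁ v₂ ∧
      DH κ r₁ r₂ v₁ v₂ ≤ K * DHdeg κ a b r₁ r₂ v₁ v₂ := by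
  set U := {x | 0 < r₁ x} ∩ {x | 0 < r₂ x}
  have hU : IsOpen U := (isOpen_lt continuous_const hr₁).inter (isOpen_lt continuous_const hr₂)
  have hnm : ∀ x ∈ U, |r₁ x - r₂ x| < r₁ x + r₂ x := fun x ⟨h₁, h₂⟩ =>
    abs_sub_lt_iff.2 ⟨by linarith [show 0 < r₂ x from h₂], by linarith [show 0 < r₁ x from h₁]⟩
  have hμ : ∀ x ∈ U, 0 < r₁ x + r₂ x := fun x hx => (abs_nonneg _).trans_lt (hnm x hx)
  have hw : ContinuousOn (fun x => ‖v₁ x - v₂ x‖) U :=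
    ((continuousOn_of_norm_sub_le_mul_sqrt fun x hx y hy => hv₁ x hx.1 y hy.1).sub
      (continuousOn_of_norm_sub_le_mul_sqrt fun x hx y hy => hv₂ x hx.2 y hy.2)).norm
  have hP : ContinuousOn (fun x => (r₁ x + r₂ x) ^ (1 / κ - 1)) U :=
    (hr₁.add hr₂).continuousOn.rpow_const fun x hx => Or.inl (hμ x hx).ne'
  have hA : ContinuousOn (fun x => a (r₁ x + r₂ x) (r₁ x - r₂ x)) U :=
    ha.comp ((hr₁.add hr₂).prodMk (hr₁.sub hr₂)).continuousOn hnm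
  have hF : ContinuousOn (fun x => nondegDensity κ (r₁ x + r₂ x) (r₁ x - r₂ x) ‖v₁ x - v₂ x‖) U :=
    hP.mul (by fun_prop)
  have hG :
      ContinuousOn (fun x => degDensity κ a b (r₁ x + r₂ x) (r₁ x - r₂ x) ‖v₁ x - v₂ x‖) U :=
    (hA.mul (hP.mul (by fun_prop))).congr fun x hx => degDensity_eq (hab _ _ (hnm x hx))
  have hKpos : 0 < K := by linarith [show 0 < 8 ^ |1 / κ - 1| * (28 + κ) by positivity]
  refine integral_le_and_le_of_lintegral_le
    (ae_restrict_of_forall_mem hU.measurableSet fun x hx => nondegDensity_nonneg hκ.le (hμ x hx).le)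
    (ae_restrict_of_forall_mem hU.measurableSet fun x hx =>
      degDensity_nonneg hκ.le (hμ x hx) (hab _ _ (hnm x hx)) (ha_nonneg _ _ (hnm x hx)))
    (hF.aestronglyMeasurable hU.measurableSet) (hG.aestronglyMeasurable hU.measurableSet) hKpos
    ?_ ?_
  · refine (setLIntegral_nondegDensity_le hU.measurableSet (hr₁.add hr₂).measurable
      (hr₁.sub hr₂).measurable hG hκ.le hε hnm (fun _ _ => norm_nonneg _)
      (fun x hx t ht =>
        pair_estimates_along_ray hr₁ hr₂ hN (by linarith) hgrad₁ hgrad₂ hv₁ hv₂ hx ht)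
      fun x hx h4 => nondegDensity_le_two_mul_degDensity (hμ x hx) (hab _ _ (hnm x hx))
        (ha_one _ _ (hμ x hx) (by linarith))).trans ?_
    gcongr
  · exact setLIntegral_ofReal_le_mul hU.measurableSet hKpos.le fun x hx =>
      (degDensity_le_mul_nondegDensity hκ.le (hμ x hx) (hab _ _ (hnm x hx))
        (ha_nonneg _ _ (hnm x hx)) (haM _ _ (hnm x hx))).trans
      (mul_le_mul_of_nonneg_right hMK (nondegDensity_nonneg hκ.le (hμ x hx).le))

theorem equivalence_of_difference_functionals_general
    {d : ℕ} {κ : ℝ} (hκ : 0 < κ)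
    (a b : ℝ → ℝ → ℝ)
    (ha_smooth : ContDiffOn ℝ (⊤ : ℕ∞) (fun p : ℝ × ℝ => a p.1 p.2) {p | |p.2| < p.1})
    (ha_hom : ∀ lam > (0:ℝ), ∀ μ ν : ℝ, |ν| < μ → a (lam * μ) (lam * ν) = a μ ν)
    (ha_nonneg : ∀ μ ν : ℝ, |ν| < μ → 0 ≤ a μ ν)
    (hab : ∀ μ ν : ℝ, |ν| < μ → μ * a μ ν = 2 * b μ ν)
    (ha_supp : ∀ μ ν : ℝ, |ν| < μ → μ / 2 < |ν| → a μ ν = 0)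
    (ha_one : ∀ μ ν : ℝ, 0 < μ → |ν| ≤ μ / 4 → a μ ν = 1)
    (c C : ℝ) (L : ℝ≥0) :
    ∃ ε₀ > (0:ℝ), ∃ K > (0:ℝ),
      ∀ (r : Fin 2 → EuclideanSpace ℝ (Fin d) → ℝ)
        (v : Fin 2 → EuclideanSpace ℝ (Fin d) → EuclideanSpace ℝ (Fin d))
        (N : EuclideanSpace ℝ (Fin d)),
      ‖N‖ = 1 →
      (∀ i, LipschitzWith L (r i)) →
      (∀ i, ∀ x, 0 < r i x →
          c * infDist x {y | ¬ 0 < r i y} ≤ r i x ∧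
          r i x ≤ C * infDist x {y | ¬ 0 < r i y}) →
      -- smallness of the control norm `A = Σᵢ (‖∇rᵢ - N‖_{L^∞} + ‖vᵢ‖_{Ċ^{1/2}})`
      (∀ i, ∀ x, 0 < r i x → ‖gradient (r i) x - N‖ ≤ ε₀) →
      (∀ i, ∀ x, 0 < r i x → ∀ y, 0 < r i y →
          ‖v i x - v i y‖ ≤ ε₀ * Real.sqrt ‖x - y‖) →
      K⁻¹ * DHdeg κ a b (r 0) (r 1) (v 0) (v 1) ≤ DH κ (r 0) (r 1) (v 0) (v 1) ∧
      DH κ (r 0) (r 1) (v 0) (v 1) ≤ K * DHdeg κ a b (r 0) (r 1) (v 0) (v 1) := by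
  obtain ⟨M, hM, haM⟩ := exists_le_of_isHomogeneous_zero ha_smooth.continuousOn ha_hom ha_supp
  refine ⟨1 / 100, by norm_num, 4 * (8 ^ |1 / κ - 1| * (28 + κ)) + M, by positivity, ?_⟩
  intro r v N hN hLip _ hgrad hv
  exact DHdeg_le_DH_and_DH_le_DHdeg hκ ha_smooth.continuousOn ha_nonneg hab ha_one haM
    (le_add_of_nonneg_right hM) (le_add_of_nonneg_left (by positivity)) le_rfl
    (hLip 0).continuous (hLip 1).continuous hN (hgrad 0) (hgrad 1) (hv 0) (hv 1)

/-- **Equivalence of the nondegenerate and degenerate difference functionals**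
(Lemma 4.2 of Ifrim–Tataru): given admissible weights `a`, `b` — smooth, homogeneous of
degree `0` resp. `1`, even in `ν`, nonnegative, with `μ a = 2b`, supported in
`{|ν| ≤ μ/2}` and `a = 1` on `{|ν| ≤ μ/4}` — if the control norms `A` of two uniformly
Lipschitz, nondegenerate states are sufficiently small, then `D̃_H ≈ D_H`. -/
theorem equivalence_of_difference_functionals
    {d : ℕ} (hd : 1 ≤ d) {κ : ℝ} (hκ : 0 < κ)
    (a b : ℝ → ℝ → ℝ)
    (ha_smooth : ContDiffOn ℝ (⊤ : ℕ∞) (fun p : ℝ × ℝ => a p.1 p.2) {p | |p.2| < p.1})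
    (hb_smooth : ContDiffOn ℝ (⊤ : ℕ∞) (fun p : ℝ × ℝ => b p.1 p.2) {p | |p.2| < p.1})
    (ha_hom : ∀ lam > (0:ℝ), ∀ μ ν : ℝ, |ν| < μ → a (lam * μ) (lam * ν) = a μ ν)
    (hb_hom : ∀ lam > (0:ℝ), ∀ μ ν : ℝ, |ν| < μ → b (lam * μ) (lam * ν) = lam * b μ ν)
    (ha_even : ∀ μ ν : ℝ, |ν| < μ → a μ (-ν) = a μ ν)
    (hb_even : ∀ μ ν : ℝ, |ν| < μ → b μ (-ν) = b μ ν)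
    (ha_nonneg : ∀ μ ν : ℝ, |ν| < μ → 0 ≤ a μ ν)
    (hb_nonneg : ∀ μ ν : ℝ, |ν| < μ → 0 ≤ b μ ν)
    (hab : ∀ μ ν : ℝ, |ν| < μ → μ * a μ ν = 2 * b μ ν)
    (ha_supp : ∀ μ ν : ℝ, |ν| < μ → μ / 2 < |ν| → a μ ν = 0)
    (hb_supp : ∀ μ ν : ℝ, |ν| < μ → μ / 2 < |ν| → b μ ν = 0)
    (ha_one : ∀ μ ν : ℝ, 0 < μ → |ν| ≤ μ / 4 → a μ ν = 1)
    (c C : ℝ) (hc : 0 < c) (hcC : c ≤ C) (L : ℝ≥0) :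
    ∃ ε₀ > (0:ℝ), ∃ K > (0:ℝ),
      ∀ (r : Fin 2 → EuclideanSpace ℝ (Fin d) → ℝ)
        (v : Fin 2 → EuclideanSpace ℝ (Fin d) → EuclideanSpace ℝ (Fin d))
        (N : EuclideanSpace ℝ (Fin d)),
      ‖N‖ = 1 →
      (∀ i, LipschitzWith L (r i)) →
      (∀ i, ∀ x, 0 < r i x →
          c * infDist x {y | ¬ 0 < r i y} ≤ r i x ∧
          r i x ≤ C * infDist x {y | ¬ 0 < r i y}) →
      -- smallness of the control norm `A = Σᵢ (‖∇rᵢ - N‖_{L^∞} + ‖vᵢ‖_{Ċ^{1/2}})`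
      (∀ i, ∀ x, 0 < r i x → ‖gradient (r i) x - N‖ ≤ ε₀) →
      (∀ i, ∀ x, 0 < r i x → ∀ y, 0 < r i y →
          ‖v i x - v i y‖ ≤ ε₀ * Real.sqrt ‖x - y‖) →
      K⁻¹ * DHdeg κ a b (r 0) (r 1) (v 0) (v 1) ≤ DH κ (r 0) (r 1) (v 0) (v 1) ∧
      DH κ (r 0) (r 1) (v 0) (v 1) ≤ K * DHdeg κ a b (r 0) (r 1) (v 0) (v 1) :=
  equivalence_of_difference_functionals_general hκ a b ha_smooth ha_hom ha_nonneg hab ha_supp ha_one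
    c C L
end

section
/- Weighted L³ interpolation bound (Lemma 4.5, with the explicit constant from its proof): Let σ > 0 and r₀ ≥ 0. For every w ∈ C¹([r₀,∞)) with compact support, ∫_{r₀}^∞ x^{σ−1} |w(x)|³ dx ≤ (3/σ) · (sup_{x ≥ r₀} |w′(x)|) · ∫_{r₀}^∞ x^{σ} w(x)² dx. -/
/-!
Integrate the derivative of `x ^ σ * |w x| ^ 3` over `(r₀, ∞)`. Since `w` has compact support,
the result is the boundary term `-r₀ ^ σ * |w r₀| ^ 3 ≤ 0`, so
`σ ∫ x ^ (σ - 1) |w|³ ≤ -3 ∫ x ^ σ |w| w w' ≤ 3 M ∫ x ^ σ w²`.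
-/

open MeasureTheory Set Filter Topology

lemma locallyIntegrable_rpow {s : ℝ} (hs : -1 < s) : LocallyIntegrable (fun x : ℝ => x ^ s) := by
  refine locallyIntegrable_iff.2 fun k hk => ?_
  obtain ⟨R, hR0, hR⟩ := hk.isBounded.subset_closedBall_lt 0 0
  rw [Real.closedBall_eq_Icc, zero_sub, zero_add] at hR
  exact ((intervalIntegrable_iff_integrableOn_Icc_of_le (by linarith)).1
    (intervalIntegral.intervalIntegrable_rpow' hs)).mono_set hR

lemma integrable_rpow_mul_of_hasCompactSupport {s : ℝ} (hs : -1 < s) {g : ℝ → ℝ}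
    (hg : Continuous g) (hgc : HasCompactSupport g) : Integrable (fun x => x ^ s * g x) :=
  (locallyIntegrable_rpow hs).integrable_smul_right_of_hasCompactSupport hg hgc

lemma HasCompactSupport.integral_Ioi_eq_neg_of_hasDerivAt {E : Type*} [NormedAddCommGroup E]
    [NormedSpace ℝ E] [CompleteSpace E] {f f' : ℝ → E} {a : ℝ} (hf : HasCompactSupport f)
    (hcont : ContinuousWithinAt f (Ici a) a) (hderiv : ∀ x ∈ Ioi a, HasDerivAt f (f' x) x)
    (hint : IntegrableOn f' (Ioi a)) : ∫ x in Ioi a, f' x = -f a := by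
  rw [hasCompactSupport_iff_eventuallyEq, coclosedCompact_eq_cocompact] at hf
  rw [integral_Ioi_of_hasDerivAt_of_tendsto hcont hderiv hint
    (hf.filter_mono atTop_le_cocompact).tendsto]
  exact zero_sub _

lemma hasDerivAt_abs_pow_three (y : ℝ) : HasDerivAt (fun t : ℝ => |t| ^ 3) (3 * (|y| * y)) y := by
  convert hasDerivAt_abs_rpow y (p := 3) (by norm_num) using 1
  · ext t
    exact_mod_cast (Real.rpow_natCast |t| 3).symm
  · norm_num [mul_assoc]

lemma HasDerivAt.rpow_mul_abs_pow_three {w : ℝ → ℝ} {w' σ x : ℝ} (hx : x ≠ 0)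
    (hw : HasDerivAt w w' x) :
    HasDerivAt (fun y => y ^ σ * |w y| ^ 3)
      (σ * (x ^ (σ - 1) * |w x| ^ 3) + 3 * (x ^ σ * (|w x| * w x * w'))) x := by
  refine ((Real.hasDerivAt_rpow_const (Or.inl hx)).fun_mul
    ((hasDerivAt_abs_pow_three (w x)).comp x hw)).congr_deriv ?_
  simp only [Function.comp_apply]
  ring

lemma neg_abs_mul_mul_le_mul_sq {a b M : ℝ} (hb : |b| ≤ M) : -(|a| * a * b) ≤ M * a ^ 2 :=
  calc -(|a| * a * b) ≤ |a| * |a| * |b| := by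
        simpa only [abs_mul, abs_abs] using neg_le_abs (|a| * a * b)
    _ = a ^ 2 * |b| := by rw [abs_mul_abs_self, sq]
    _ ≤ a ^ 2 * M := by gcongr
    _ = M * a ^ 2 := mul_comm _ _

section

variable {σ r₀ : ℝ} {w : ℝ → ℝ}

lemma integrable_rpow_mul_abs_mul_deriv (hσ : -1 < σ) (hw : ContDiff ℝ 1 w)
    (hsupp : HasCompactSupport w) :
    Integrable (fun x => x ^ σ * (|w x| * w x * deriv w x)) :=
  integrable_rpow_mul_of_hasCompactSupport hσ
    ((hw.continuous.abs.mul hw.continuous).mul (hw.continuous_deriv le_rfl))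
    (hsupp.abs.mul_right.mul_right)

lemma integral_Ioi_rpow_mul_abs_pow_three_eq (hσ : 0 < σ) (hr₀ : 0 ≤ r₀)
    (hw : ContDiff ℝ 1 w) (hsupp : HasCompactSupport w) :
    σ * (∫ x in Ioi r₀, x ^ (σ - 1) * |w x| ^ 3)
      + 3 * ∫ x in Ioi r₀, x ^ σ * (|w x| * w x * deriv w x) = -(r₀ ^ σ * |w r₀| ^ 3) := by
  have hsupp_cube : HasCompactSupport fun x => |w x| ^ 3 :=
    hsupp.comp_left (g := fun t => |t| ^ 3) (by norm_num)
  have hint₁ : Integrable (fun x => x ^ (σ - 1) * |w x| ^ 3) :=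
    integrable_rpow_mul_of_hasCompactSupport (by linarith) (hw.continuous.abs.pow 3) hsupp_cube
  have hint₂ := integrable_rpow_mul_abs_mul_deriv (by linarith : -1 < σ) hw hsupp
  rw [← integral_const_mul, ← integral_const_mul, ← integral_add (hint₁.const_mul _).integrableOn
    (hint₂.const_mul _).integrableOn]
  refine HasCompactSupport.integral_Ioi_eq_neg_of_hasDerivAt (f := fun x => x ^ σ * |w x| ^ 3)
    ?_ ?_ (fun x hx => ?_) ((hint₁.const_mul σ).add (hint₂.const_mul 3)).integrableOn
  · exact hsupp_cube.mul_left
  · exact ((Real.continuousAt_rpow_const r₀ σ (Or.inr hσ.le)).mul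
      (hw.continuous.abs.pow 3).continuousAt).continuousWithinAt
  · exact HasDerivAt.rpow_mul_abs_pow_three (hr₀.trans_lt hx).ne'
      ((hw.differentiable one_ne_zero) x).hasDerivAt

lemma neg_integral_Ioi_rpow_mul_abs_mul_deriv_le (hσ : -1 < σ) (hr₀ : 0 ≤ r₀)
    (hw : ContDiff ℝ 1 w) (hsupp : HasCompactSupport w) {M : ℝ}
    (hM : ∀ x ∈ Ici r₀, |deriv w x| ≤ M) :
    -∫ x in Ioi r₀, x ^ σ * (|w x| * w x * deriv w x) ≤ M * ∫ x in Ioi r₀, x ^ σ * w x ^ 2 := by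
  have hint_sq : Integrable (fun x => x ^ σ * w x ^ 2) :=
    integrable_rpow_mul_of_hasCompactSupport hσ (hw.continuous.pow 2)
      (hsupp.comp_left (g := fun t => t ^ 2) (by norm_num))
  rw [← integral_neg, ← integral_const_mul]
  refine setIntegral_mono_on (integrable_rpow_mul_abs_mul_deriv hσ hw hsupp).neg.integrableOn
    (hint_sq.const_mul M).integrableOn measurableSet_Ioi fun x hx => ?_
  have hxσ : 0 ≤ x ^ σ := Real.rpow_nonneg (hr₀.trans (le_of_lt hx)) σ
  calc -(x ^ σ * (|w x| * w x * deriv w x)) = x ^ σ * -(|w x| * w x * deriv w x) := by ring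
    _ ≤ x ^ σ * (M * w x ^ 2) :=
      mul_le_mul_of_nonneg_left (neg_abs_mul_mul_le_mul_sq (hM x (Ioi_subset_Ici_self hx))) hxσ
    _ = M * (x ^ σ * w x ^ 2) := by ring

end

/-- **Weighted L³ interpolation bound** (Lemma 4.5 of Ifrim–Tataru, with the explicit
constant from its proof): for `σ > 0`, `r₀ ≥ 0` and `w ∈ C¹` with compact support,
`∫_{r₀}^∞ x^{σ-1} |w|³ dx ≤ (3/σ) · (sup_{x ≥ r₀} |w'(x)|) · ∫_{r₀}^∞ x^σ w² dx`,
where the supremum is expressed through an arbitrary bound `M`. -/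
theorem weighted_L3_interpolation
    (σ r₀ : ℝ) (hσ : 0 < σ) (hr₀ : 0 ≤ r₀)
    (w : ℝ → ℝ) (hw : ContDiff ℝ 1 w) (hsupp : HasCompactSupport w)
    (M : ℝ) (hM : ∀ x ∈ Set.Ici r₀, |deriv w x| ≤ M) :
    ∫ x in Set.Ioi r₀, x ^ (σ - 1) * |w x| ^ 3
      ≤ (3 / σ) * M * ∫ x in Set.Ioi r₀, x ^ σ * (w x) ^ 2 := by
  have hibp := integral_Ioi_rpow_mul_abs_pow_three_eq hσ hr₀ hw hsupp
  have hcross := neg_integral_Ioi_rpow_mul_abs_mul_deriv_le (by linarith : -1 < σ) hr₀ hw hsupp hM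
  have hboundary : 0 ≤ r₀ ^ σ * |w r₀| ^ 3 := by positivity
  rw [div_mul_eq_mul_div, div_mul_eq_mul_div, le_div_iff₀ hσ]
  linarith
end

section
/- Iterated Hardy embedding (one-dimensional core of Lemma 2.3, H^{j,σ} ⊂ H^{j−σ}): For every integer m ≥ 1 and every g ∈ C^m([0,∞)) with compact support, ‖g‖_{L²(0,∞)} ≤ ( ∏_{i=1}^{m} 2/(2i−1) ) · ‖x^m g^{(m)}‖_{L²(0,∞)}, where g^{(m)} is the m-th derivative of g. -/
/-!
Integrating the derivative of `x ^ (2k+1) f(x)²` over `(0, ∞)` gives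
`(2k+1) ‖x^k f‖² = -2 ⟨x^k f, x^(k+1) f'⟩`, so Cauchy–Schwarz yields the weighted Hardy
inequality `‖x^k f‖ ≤ 2/(2k+1) ‖x^(k+1) f'‖` in `L²(0, ∞)`. Applying it to `f = g^(k)` for
`k = 0, …, m-1` and chaining the bounds gives the constant `∏_{i=1}^m 2/(2i-1)`.
-/

open MeasureTheory Set Filter Topology

theorem abs_integral_mul_le_sqrt_mul_sqrt {α : Type*} [MeasurableSpace α] {μ : Measure α}
    {u v : α → ℝ} (hu : MemLp u 2 μ) (hv : MemLp v 2 μ) :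
    |∫ x, u x * v x ∂μ| ≤ √(∫ x, u x ^ 2 ∂μ) * √(∫ x, v x ^ 2 ∂μ) := by
  have hnorm_rpow (w : α → ℝ) : ∫ x, ‖w x‖ ^ (2 : ℝ) ∂μ = ∫ x, w x ^ 2 ∂μ := by
    simp only [Real.rpow_two, Real.norm_eq_abs, sq_abs]
  calc |∫ x, u x * v x ∂μ| ≤ ∫ x, ‖u x‖ * ‖v x‖ ∂μ := by
        simpa only [Real.norm_eq_abs, norm_mul] using
          norm_integral_le_integral_norm (fun x ↦ u x * v x)
    _ ≤ (∫ x, ‖u x‖ ^ (2 : ℝ) ∂μ) ^ (1 / (2 : ℝ)) * (∫ x, ‖v x‖ ^ (2 : ℝ) ∂μ) ^ (1 / (2 : ℝ)) :=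
        integral_mul_norm_le_Lp_mul_Lq Real.HolderConjugate.two_two (by simpa using hu)
          (by simpa using hv)
    _ = √(∫ x, u x ^ 2 ∂μ) * √(∫ x, v x ^ 2 ∂μ) := by
        rw [hnorm_rpow, hnorm_rpow, ← Real.sqrt_eq_rpow, ← Real.sqrt_eq_rpow]

theorem integral_Ioi_deriv_eq_neg_of_hasCompactSupport {E : Type*} [NormedAddCommGroup E]
    [NormedSpace ℝ E] [CompleteSpace E] {F : ℝ → E} (hF : ContDiff ℝ 1 F)
    (hs : HasCompactSupport F) (a : ℝ) : ∫ x in Ioi a, deriv F x = -F a := by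
  have hlim : Tendsto F atTop (𝓝 0) :=
    hs.is_zero_at_infty.mono_left (cocompact_eq_atBot_atTop (α := ℝ) ▸ le_sup_right)
  have hint : IntegrableOn (deriv F) (Ioi a) :=
    ((hF.continuous_deriv le_rfl).integrable_of_hasCompactSupport hs.deriv).integrableOn
  rw [integral_Ioi_of_hasDerivAt_of_tendsto hF.continuous.continuousWithinAt
    (fun x _ ↦ (hF.differentiable one_ne_zero x).hasDerivAt) hint hlim, zero_sub]

theorem HasCompactSupport.iteratedDeriv {𝕜 : Type*} [NontriviallyNormedField 𝕜] {E : Type*}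
    [NormedAddCommGroup E] [NormedSpace 𝕜 E] {f : 𝕜 → E} (hs : HasCompactSupport f) (n : ℕ) :
    HasCompactSupport (iteratedDeriv n f) := by
  induction n with
  | zero => simpa using hs
  | succ n ih => rw [iteratedDeriv_succ]; exact ih.deriv

section WeightedHardy

variable (k : ℕ) {f : ℝ → ℝ}

theorem mul_integral_Ioi_pow_mul_sq_eq (hf : ContDiff ℝ 1 f) (hs : HasCompactSupport f) :
    (2 * k + 1) * ∫ x in Ioi 0, (x ^ k * f x) ^ 2
      = -(2 * ∫ x in Ioi 0, x ^ k * f x * (x ^ (k + 1) * deriv f x)) := by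
  set u : ℝ → ℝ := fun x ↦ x ^ k * f x
  set v : ℝ → ℝ := fun x ↦ x ^ (k + 1) * deriv f x
  have hu : Continuous u := by fun_prop
  have hv : Continuous v := (continuous_pow _).mul (hf.continuous_deriv le_rfl)
  have huu : IntegrableOn (fun x ↦ u x ^ 2) (Ioi 0) := by
    simp only [sq]
    exact ((hu.mul hu).integrable_of_hasCompactSupport hs.mul_left.mul_left).integrableOn
  have huv : IntegrableOn (fun x ↦ u x * v x) (Ioi 0) :=
    ((hu.mul hv).integrable_of_hasCompactSupport hs.deriv.mul_left.mul_left).integrableOn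
  set F : ℝ → ℝ := fun x ↦ x ^ (2 * k + 1) * f x * f x
  have hFs : HasCompactSupport F := hs.mul_left
  have hderiv : deriv F = fun x ↦ (2 * k + 1) * u x ^ 2 + 2 * (u x * v x) := by
    ext x
    have hfx := (hf.differentiable one_ne_zero x).hasDerivAt
    refine (((hasDerivAt_pow _ x).mul hfx).mul hfx).deriv.trans ?_
    simp only [u, v, Pi.mul_apply]
    push_cast
    ring
  have h := integral_Ioi_deriv_eq_neg_of_hasCompactSupport (by fun_prop) hFs 0
  rw [hderiv, integral_add (huu.const_mul _) (huv.const_mul _), integral_const_mul,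
    integral_const_mul] at h
  simp only [F, zero_pow (Nat.succ_ne_zero _), zero_mul, neg_zero] at h
  linarith

theorem hardy_inequality_Ioi_pow (hf : ContDiff ℝ 1 f) (hs : HasCompactSupport f) :
    √(∫ x in Ioi 0, (x ^ k * f x) ^ 2)
      ≤ 2 / (2 * k + 1) * √(∫ x in Ioi 0, (x ^ (k + 1) * deriv f x) ^ 2) := by
  set A := √(∫ x in Ioi 0, (x ^ k * f x) ^ 2)
  set B := √(∫ x in Ioi 0, (x ^ (k + 1) * deriv f x) ^ 2)
  have hcs : |∫ x in Ioi 0, x ^ k * f x * (x ^ (k + 1) * deriv f x)| ≤ A * B :=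
    abs_integral_mul_le_sqrt_mul_sqrt
      (((continuous_pow k).mul hf.continuous).memLp_of_hasCompactSupport hs.mul_left |>.restrict _)
      (((continuous_pow _).mul (hf.continuous_deriv le_rfl)).memLp_of_hasCompactSupport
        hs.deriv.mul_left |>.restrict _)
  have hsq : (2 * k + 1) * (A * A) ≤ 2 * B * A := by
    rw [Real.mul_self_sqrt (integral_nonneg fun x ↦ sq_nonneg _),
      mul_integral_Ioi_pow_mul_sq_eq k hf hs]
    nlinarith [neg_abs_le (∫ x in Ioi 0, x ^ k * f x * (x ^ (k + 1) * deriv f x))]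
  have hA : 0 ≤ A := Real.sqrt_nonneg _
  rw [div_mul_eq_mul_div, le_div_iff₀ (by positivity)]
  rcases hA.eq_or_lt with hA0 | hApos
  · rw [← hA0, zero_mul]; positivity
  · nlinarith

end WeightedHardy

theorem iterated_hardy_embedding_general (m : ℕ)
    (g : ℝ → ℝ) (hg : ContDiff ℝ m g) (hsupp : HasCompactSupport g) :
    Real.sqrt (∫ x in Set.Ioi (0:ℝ), (g x) ^ 2)
      ≤ (∏ i ∈ Finset.Icc 1 m, (2:ℝ) / (2 * (i:ℝ) - 1)) *
        Real.sqrt (∫ x in Set.Ioi (0:ℝ), (x ^ m * iteratedDeriv m g x) ^ 2) := by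
  induction m with
  | zero => simp
  | succ m ih =>
    have hconst : 0 ≤ ∏ i ∈ Finset.Icc 1 m, (2:ℝ) / (2 * (i:ℝ) - 1) :=
      Finset.prod_nonneg fun i hi ↦ by
        have : (1 : ℝ) ≤ i := by exact_mod_cast (Finset.mem_Icc.mp hi).1
        exact div_nonneg zero_le_two (by linarith)
    have hderiv : ContDiff ℝ 1 (iteratedDeriv m g) := by
      rw [contDiff_one_iff_deriv, ← iteratedDeriv_succ]
      exact ⟨hg.differentiable_iteratedDeriv m (by norm_cast; omega),
        hg.continuous_iteratedDeriv _ le_rfl⟩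
    calc _ ≤ (∏ i ∈ Finset.Icc 1 m, (2:ℝ) / (2 * (i:ℝ) - 1)) *
          √(∫ x in Ioi 0, (x ^ m * iteratedDeriv m g x) ^ 2) :=
          ih (hg.of_le (by norm_cast; omega))
      _ ≤ (∏ i ∈ Finset.Icc 1 m, (2:ℝ) / (2 * (i:ℝ) - 1)) * (2 / (2 * m + 1) *
          √(∫ x in Ioi 0, (x ^ (m + 1) * iteratedDeriv (m + 1) g x) ^ 2)) := by
          rw [iteratedDeriv_succ]
          exact mul_le_mul_of_nonneg_left
            (hardy_inequality_Ioi_pow m hderiv (hsupp.iteratedDeriv m)) hconst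
      _ = _ := by
          rw [Finset.prod_Icc_succ_top (by omega)]
          push_cast
          ring

/-- **Iterated Hardy embedding** (one-dimensional core of Lemma 2.3, `H^{j,σ} ⊂ H^{j-σ}`):
for every integer `m ≥ 1` and every `g ∈ Cᵐ([0,∞))` with compact support,
`‖g‖_{L²(0,∞)} ≤ (∏_{i=1}^m 2/(2i-1)) ‖x^m g^{(m)}‖_{L²(0,∞)}`. -/
theorem iterated_hardy_embedding (m : ℕ) (hm : 1 ≤ m)
    (g : ℝ → ℝ) (hg : ContDiff ℝ m g) (hsupp : HasCompactSupport g) :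
    Real.sqrt (∫ x in Set.Ioi (0:ℝ), (g x) ^ 2)
      ≤ (∏ i ∈ Finset.Icc 1 m, (2:ℝ) / (2 * (i:ℝ) - 1)) *
        Real.sqrt (∫ x in Set.Ioi (0:ℝ), (x ^ m * iteratedDeriv m g x) ^ 2) :=
  iterated_hardy_embedding_general m g hg hsupp
end

section
/- Ungar's interpolation inequality on an interval (Proposition 2.19): Let p₀, p₂ ∈ [1,∞] and p₁ ∈ [1,∞) satisfy 2/p₁ = 1/p₀ + 1/p₂. There is a constant C, depending only on the exponents, such that for every bounded interval I ⊂ ℝ of length λ > 0 and every u ∈ C²(I), ‖u′‖_{L^{p₁}(I)}^{p₁} ≤ C ( λ^{1+p₁−p₁/p₂} ‖u″‖_{L^{p₂}(I)}^{p₁} + λ^{−(1+p₁−p₁/p₂)} ‖u‖_{L^{p₀}(I)}^{p₁} ). -/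
open MeasureTheory Set
open scoped ENNReal

/-!
Choose `y` in the first and `z` in the last quarter of `I` with `|u| ≤ (4/λ) ∫_I |u|` there.
By the mean value theorem some `ξ` between them has `|u'(ξ)| ≤ |u z - u y| / (z - y) ≤ 16 λ⁻² ∫_I |u|`,
and `|u'(x) - u'(ξ)| ≤ ∫_I |u''|`, so `sup_I |u'| ≤ 16 λ⁻² ‖u‖₁ + ‖u''‖₁`. Hölder's inequality turns
the `L¹` norms into `L^{p₀}` and `L^{p₂}` norms, and `‖u'‖_{p₁} ≤ λ^{1/p₁} sup_I |u'|`. After raising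
to the power `p₁`, the relation `2/p₁ = 1/p₀ + 1/p₂` makes the powers of `λ` exactly
`λ^{±(1 + p₁ - p₁/p₂)}`.
-/

theorem exists_mem_Ioo_abs_mul_sub_le_setIntegral {f : ℝ → ℝ} {s : Set ℝ} {c d : ℝ}
    (hcd : c < d) (hsub : Ioo c d ⊆ s) (hf : IntegrableOn f s) :
    ∃ y ∈ Ioo c d, |f y| * (d - c) ≤ ∫ t in s, |f t| := by
  have hfabs : IntegrableOn (fun t => |f t|) s := hf.abs
  obtain ⟨y, hy, hyavg⟩ := exists_le_setAverage (f := fun t => |f t|)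
    (by simp [hcd]) (by simp) (hfabs.mono_set hsub)
  refine ⟨y, hy, ?_⟩
  rw [setAverage_eq, Real.volume_real_Ioo_of_le hcd.le, smul_eq_mul,
    ← div_eq_inv_mul, le_div_iff₀ (sub_pos.2 hcd)] at hyavg
  calc |f y| * (d - c) ≤ ∫ t in Ioo c d, |f t| := hyavg
    _ ≤ ∫ t in s, |f t| :=
      setIntegral_mono_set hfabs (.of_forall fun _ => abs_nonneg _) hsub.eventuallyLE

theorem abs_sub_le_setIntegral_abs_of_hasDerivAt {f f' : ℝ → ℝ} {s : Set ℝ}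
    (hs : s.OrdConnected) (hf : ∀ t ∈ s, HasDerivAt f (f' t) t) (hf' : IntegrableOn f' s)
    {x y : ℝ} (hx : x ∈ s) (hy : y ∈ s) :
    |f y - f x| ≤ ∫ t in s, |f' t| := by
  have hsub : uIcc x y ⊆ s := hs.uIcc_subset hx hy
  rw [← intervalIntegral.integral_eq_sub_of_hasDerivAt (fun t ht => hf t (hsub ht))
    (hf'.mono_set hsub).intervalIntegrable]
  calc |∫ t in x..y, f' t| ≤ ∫ t in uIoc x y, |f' t| := by
        simpa only [Real.norm_eq_abs] using
          intervalIntegral.norm_integral_le_integral_norm_uIoc (f := f') (μ := volume)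
    _ ≤ ∫ t in s, |f' t| :=
      setIntegral_mono_set hf'.abs (.of_forall fun _ => abs_nonneg _)
        (uIoc_subset_uIcc.trans hsub).eventuallyLE

theorem abs_deriv_le_of_mem_Ioo {u u' u'' : ℝ → ℝ} {a lam : ℝ} (hlam : 0 < lam)
    (hu : ∀ t ∈ Ioo a (a + lam), HasDerivAt u (u' t) t)
    (hu' : ∀ t ∈ Ioo a (a + lam), HasDerivAt u' (u'' t) t)
    (hu_int : IntegrableOn u (Ioo a (a + lam))) (hu''_int : IntegrableOn u'' (Ioo a (a + lam)))
    {x : ℝ} (hx : x ∈ Ioo a (a + lam)) :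
    |u' x| ≤ 16 / lam ^ 2 * (∫ t in Ioo a (a + lam), |u t|) + ∫ t in Ioo a (a + lam), |u'' t| := by
  obtain ⟨y, hy, hyK⟩ := exists_mem_Ioo_abs_mul_sub_le_setIntegral (by linarith)
    (Ioo_subset_Ioo_right (by linarith)) hu_int (c := a) (d := a + lam / 4)
  obtain ⟨z, hz, hzK⟩ := exists_mem_Ioo_abs_mul_sub_le_setIntegral (by linarith)
    (Ioo_subset_Ioo_left (by linarith)) hu_int (c := a + 3 * lam / 4) (d := a + lam)
  set K := ∫ t in Ioo a (a + lam), |u t|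
  have hK : 0 ≤ K := integral_nonneg fun _ => abs_nonneg _
  have hyz : lam / 2 ≤ z - y := by linarith [hy.2, hz.1]
  have hsub : Icc y z ⊆ Ioo a (a + lam) := Icc_subset_Ioo hy.1 (by linarith [hz.2])
  obtain ⟨ξ, hξ, hslope⟩ := exists_hasDerivAt_eq_slope u u' (by linarith)
    (fun t ht => (hu t (hsub ht)).continuousAt.continuousWithinAt)
    (fun t ht => hu t (hsub (Ioo_subset_Icc_self ht)))
  have hξ_bound : |u' ξ| ≤ 16 / lam ^ 2 * K := by
    rw [hslope, abs_div, abs_of_pos (a := z - y) (by linarith), div_le_iff₀ (by linarith)]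
    calc |u z - u y| ≤ |u z| + |u y| := abs_sub _ _
      _ ≤ 16 / lam ^ 2 * K * (lam / 2) := by
        field_simp
        nlinarith
      _ ≤ 16 / lam ^ 2 * K * (z - y) := by gcongr
  have hosc : |u' x - u' ξ| ≤ ∫ t in Ioo a (a + lam), |u'' t| :=
    abs_sub_le_setIntegral_abs_of_hasDerivAt ordConnected_Ioo hu' hu''_int
      (hsub (Ioo_subset_Icc_self hξ)) hx
  linarith [abs_sub_abs_le_abs_sub (u' x) (u' ξ)]

theorem ofReal_integral_abs_eq_eLpNorm_one {α : Type*} [MeasurableSpace α] {μ : Measure α}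
    {f : α → ℝ} (hf : Integrable f μ) : ENNReal.ofReal (∫ x, |f x| ∂μ) = eLpNorm f 1 μ := by
  simpa only [Real.norm_eq_abs, eLpNorm_one_eq_lintegral_enorm] using
    ofReal_integral_norm_eq_lintegral_enorm hf

theorem eLpNorm_deriv_le_of_contDiffOn {u : ℝ → ℝ} {a lam : ℝ} (hlam : 0 < lam)
    (hu : ContDiffOn ℝ 2 u (Ioo a (a + lam))) (p : ℝ≥0∞) :
    eLpNorm (deriv u) p (volume.restrict (Ioo a (a + lam))) ≤
      ENNReal.ofReal lam ^ p.toReal⁻¹ *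
        (16 * ENNReal.ofReal lam ^ (-2 : ℝ) * eLpNorm u 1 (volume.restrict (Ioo a (a + lam)))
          + eLpNorm (deriv (deriv u)) 1 (volume.restrict (Ioo a (a + lam)))) := by
  set s := Ioo a (a + lam)
  have hs : IsOpen s := isOpen_Ioo
  have hu' : ContDiffOn ℝ 1 (deriv u) s := hu.deriv_of_isOpen hs (by norm_num)
  have hL : ENNReal.ofReal lam ≠ 0 := by simpa using hlam
  by_cases hfin : eLpNorm u 1 (volume.restrict s) = ⊤ ∨
      eLpNorm (deriv (deriv u)) 1 (volume.restrict s) = ⊤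
  · rcases hfin with h | h <;> simp [h, hL, ENNReal.rpow_eq_zero_iff]
  rw [not_or] at hfin
  have hu_int : IntegrableOn u s := memLp_one_iff_integrable.1
    ⟨hu.continuousOn.aestronglyMeasurable measurableSet_Ioo, Ne.lt_top hfin.1⟩
  have hu''_int : IntegrableOn (deriv (deriv u)) s := memLp_one_iff_integrable.1
    ⟨(hu'.continuousOn_deriv_of_isOpen hs le_rfl).aestronglyMeasurable measurableSet_Ioo,
      Ne.lt_top hfin.2⟩
  have hbound : ∀ᵐ t ∂(volume.restrict s), ‖deriv u t‖ ≤
      16 / lam ^ 2 * (∫ t in s, |u t|) + ∫ t in s, |deriv (deriv u) t| := by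
    refine (ae_restrict_iff' measurableSet_Ioo).2 (.of_forall fun t ht => ?_)
    exact abs_deriv_le_of_mem_Ioo hlam
      (fun t ht => ((hu.differentiableOn (by norm_num)).differentiableAt (hs.mem_nhds ht)).hasDerivAt)
      (fun t ht => ((hu'.differentiableOn one_ne_zero).differentiableAt (hs.mem_nhds ht)).hasDerivAt)
      hu_int hu''_int ht
  have hcoeff : ENNReal.ofReal (16 / lam ^ 2) = 16 * ENNReal.ofReal lam ^ (-2 : ℝ) := by
    rw [ENNReal.ofReal_rpow_of_pos hlam, ← ENNReal.ofReal_ofNat 16,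
      ← ENNReal.ofReal_mul (by norm_num), Real.rpow_neg hlam.le, Real.rpow_two, div_eq_mul_inv]
  calc eLpNorm (deriv u) p (volume.restrict s)
      ≤ volume.restrict s univ ^ p.toReal⁻¹ *
          ENNReal.ofReal (16 / lam ^ 2 * (∫ t in s, |u t|) + ∫ t in s, |deriv (deriv u) t|) :=
        eLpNorm_le_of_ae_bound hbound
    _ = _ := by
      rw [Measure.restrict_apply_univ, Real.volume_Ioo, add_sub_cancel_left,
        ENNReal.ofReal_add (by positivity) (integral_nonneg fun _ => abs_nonneg _),
        ENNReal.ofReal_mul (by positivity), hcoeff, ofReal_integral_abs_eq_eLpNorm_one hu_int,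
        ofReal_integral_abs_eq_eLpNorm_one hu''_int]

theorem eLpNorm_deriv_le_interpolation {u : ℝ → ℝ} {a lam : ℝ} (hlam : 0 < lam)
    (hu : ContDiffOn ℝ 2 u (Ioo a (a + lam))) (p : ℝ≥0∞) {p₀ p₂ : ℝ≥0∞}
    (hp₀ : 1 ≤ p₀) (hp₂ : 1 ≤ p₂) :
    eLpNorm (deriv u) p (volume.restrict (Ioo a (a + lam))) ≤
      16 * ENNReal.ofReal lam ^ (p.toReal⁻¹ - 1 - p₀.toReal⁻¹) *
          eLpNorm u p₀ (volume.restrict (Ioo a (a + lam)))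
        + ENNReal.ofReal lam ^ (p.toReal⁻¹ + 1 - p₂.toReal⁻¹) *
          eLpNorm (deriv (deriv u)) p₂ (volume.restrict (Ioo a (a + lam))) := by
  set s := Ioo a (a + lam)
  set L := ENNReal.ofReal lam
  have hL : L ≠ 0 := by simpa [L] using hlam
  have hLtop : L ≠ ⊤ := ENNReal.ofReal_ne_top
  have hs : volume.restrict s univ = L := by simp [s, L]
  have holder {f : ℝ → ℝ} {q : ℝ≥0∞} (hq : 1 ≤ q) (hf : ContinuousOn f s) :
      eLpNorm f 1 (volume.restrict s) ≤ eLpNorm f q (volume.restrict s) * L ^ (1 - q.toReal⁻¹) := by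
    simpa [hs] using eLpNorm_le_eLpNorm_mul_rpow_measure_univ (μ := volume.restrict s) hq
      (hf.aestronglyMeasurable measurableSet_Ioo)
  have hu'' : ContinuousOn (deriv (deriv u)) s :=
    (hu.deriv_of_isOpen isOpen_Ioo (by norm_num)).continuousOn_deriv_of_isOpen isOpen_Ioo le_rfl
  calc eLpNorm (deriv u) p (volume.restrict s)
      ≤ L ^ p.toReal⁻¹ * (16 * L ^ (-2 : ℝ) * eLpNorm u 1 (volume.restrict s)
          + eLpNorm (deriv (deriv u)) 1 (volume.restrict s)) :=
        eLpNorm_deriv_le_of_contDiffOn hlam hu p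
    _ ≤ L ^ p.toReal⁻¹ * (16 * L ^ (-2 : ℝ) *
            (eLpNorm u p₀ (volume.restrict s) * L ^ (1 - p₀.toReal⁻¹))
          + eLpNorm (deriv (deriv u)) p₂ (volume.restrict s) * L ^ (1 - p₂.toReal⁻¹)) := by
        gcongr
        exacts [holder hp₀ hu.continuousOn, holder hp₂ hu'']
    _ = _ := by
        rw [show p.toReal⁻¹ - 1 - p₀.toReal⁻¹ = p.toReal⁻¹ + (-2 + (1 - p₀.toReal⁻¹)) by ring,
          show p.toReal⁻¹ + 1 - p₂.toReal⁻¹ = p.toReal⁻¹ + (1 - p₂.toReal⁻¹) by ring,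
          ENNReal.rpow_add _ _ hL hLtop, ENNReal.rpow_add _ _ hL hLtop,
          ENNReal.rpow_add _ _ hL hLtop]
        ring

theorem toReal_inv_add_toReal_inv_of_two_div_eq {p₀ p₂ p₁ : ℝ≥0∞} (hp₀ : p₀ ≠ 0) (hp₂ : p₂ ≠ 0)
    (hrel : 2 / p₁ = 1 / p₀ + 1 / p₂) : p₀.toReal⁻¹ + p₂.toReal⁻¹ = 2 / p₁.toReal := by
  have h := congrArg ENNReal.toReal hrel
  rw [one_div, one_div, ENNReal.toReal_add (ENNReal.inv_ne_top.2 hp₀) (ENNReal.inv_ne_top.2 hp₂),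
    ENNReal.toReal_inv, ENNReal.toReal_inv, ENNReal.toReal_div] at h
  simpa using h.symm

theorem ENNReal.rpow_mul_add_le {c : ℝ≥0∞} (hc : 1 ≤ c) (x y : ℝ≥0∞) {q : ℝ} (hq : 1 ≤ q) :
    (c * x + y) ^ q ≤ 2 ^ (q - 1) * c ^ q * (x ^ q + y ^ q) :=
  calc (c * x + y) ^ q ≤ (c * x + c * y) ^ q := by gcongr; exact le_mul_of_one_le_left' hc
    _ = c ^ q * (x + y) ^ q := by rw [← mul_add, ENNReal.mul_rpow_of_nonneg _ _ (by positivity)]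
    _ ≤ c ^ q * (2 ^ (q - 1) * (x ^ q + y ^ q)) := by
        gcongr; exact ENNReal.rpow_add_le_mul_rpow_add_rpow _ _ hq
    _ = 2 ^ (q - 1) * c ^ q * (x ^ q + y ^ q) := by ring

/-- **Ungar's interpolation inequality on an interval** (Proposition 2.19):
for exponents with `2/p₁ = 1/p₀ + 1/p₂` (`p₁` finite), there is a constant `C` such that
for every bounded interval `I` of length `λ > 0` and every `u ∈ C²(I)`,
`‖u'‖_{L^{p₁}(I)}^{p₁} ≤ C (λ^{1+p₁-p₁/p₂} ‖u''‖_{L^{p₂}(I)}^{p₁}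
  + λ^{-(1+p₁-p₁/p₂)} ‖u‖_{L^{p₀}(I)}^{p₁})`. -/
theorem ungar_interpolation
    (p₀ p₂ p₁ : ℝ≥0∞) (hp₀ : 1 ≤ p₀) (hp₂ : 1 ≤ p₂)
    (hp₁ : 1 ≤ p₁) (hp₁top : p₁ ≠ ⊤)
    (hrel : 2 / p₁ = 1 / p₀ + 1 / p₂) :
    ∃ C : ℝ≥0∞, C ≠ ⊤ ∧ ∀ (a lam : ℝ), 0 < lam → ∀ u : ℝ → ℝ,
      ContDiffOn ℝ 2 u (Set.Ioo a (a + lam)) →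
      eLpNorm (deriv u) p₁ (volume.restrict (Set.Ioo a (a + lam))) ^ p₁.toReal
        ≤ C * (ENNReal.ofReal (lam ^ (1 + p₁.toReal - p₁.toReal / p₂.toReal)) *
                eLpNorm (deriv (deriv u)) p₂ (volume.restrict (Set.Ioo a (a + lam))) ^ p₁.toReal
              + ENNReal.ofReal (lam ^ (-(1 + p₁.toReal - p₁.toReal / p₂.toReal))) *
                eLpNorm u p₀ (volume.restrict (Set.Ioo a (a + lam))) ^ p₁.toReal) := by
  set q := p₁.toReal
  have hq : 1 ≤ q := by simpa using ENNReal.toReal_mono hp₁top hp₁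
  have hq0 : q ≠ 0 := by positivity
  refine ⟨2 ^ (q - 1) * 16 ^ q, by finiteness, fun a lam hlam u hu => ?_⟩
  set α := 1 + q - q / p₂.toReal
  have hexp : q * p₀.toReal⁻¹ + q * p₂.toReal⁻¹ = 2 := by
    rw [← mul_add, toReal_inv_add_toReal_inv_of_two_div_eq (by positivity) (by positivity) hrel,
      mul_div_cancel₀ _ hq0]
  have h := eLpNorm_deriv_le_interpolation hlam hu p₁ hp₀ hp₂
  rw [show q⁻¹ - 1 - p₀.toReal⁻¹ = -α / q by
      rw [eq_div_iff hq0]; linear_combination inv_mul_cancel₀ hq0 - hexp,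
    show q⁻¹ + 1 - p₂.toReal⁻¹ = α / q by
      rw [eq_div_iff hq0]; linear_combination inv_mul_cancel₀ hq0, mul_assoc 16] at h
  calc _ ≤ _ := ENNReal.rpow_le_rpow h (by positivity)
    _ ≤ _ := ENNReal.rpow_mul_add_le (by norm_num) _ _ hq
    _ = _ := by
        simp only [ENNReal.mul_rpow_of_nonneg _ _ (by positivity : (0 : ℝ) ≤ q),
          ← ENNReal.rpow_mul, div_mul_cancel₀ _ hq0, ← ENNReal.ofReal_rpow_of_pos hlam]
        ring
end

section
/- One-dimensional weighted interpolation against the Hölder-1/2 seminorm (Lemma 2.20): Let p₁ ∈ [3,∞), p₂ = p₁/3 ∈ [1,∞), and σ₁, σ₂ ∈ ℝ with σ₂ = 3σ₁, 3/2 − 1/p₂ > σ₂, and σ₁ > −1/p₁. Then there is a constant C, depending only on the exponents, such that for every f ∈ C²((0,∞)) with ‖f‖_{Ċ^{1/2}} < ∞ and ‖x^{σ₂} f″‖_{L^{p₂}(0,∞)} < ∞, ‖x^{σ₁} f′‖_{L^{p₁}(0,∞)} ≤ C ‖f‖_{Ċ^{1/2}}^{2/3} ‖x^{σ₂} f″‖_{L^{p₂}(0,∞)}^{1/3}.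 -/
/-!
Write `u = |f'|`, `g = |f''|`, `p₁ = 3q` and `a = σ₁ p₁ > -1`. By the mean value theorem the
Hölder bound forces every interval on which `u ≥ λ` to have length at most `(H/λ)²`.

Fix a dyadic level `λ`. A connected component of `{u > λ}` that meets `{u ≥ 4λ}` is an interval
of length `≤ (H/λ)²` whose right end `d` has `u d ≤ λ`; let `ξ` be its last point with `u ≥ 4λ`.
On `(ξ, d)` the function `u` falls by `3λ`, so `λ ≤ ∫_ξ^d g`, and Hölder gives
`λ^q ≤ (H/λ)^{2(q-1)} ∫_ξ^d g^q`. The points of the component with `u ≥ 4λ` lie in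
`[d - (H/λ)², ξ]`, whose `x^a`-measure (finite as `x^a` is integrable at `0`) is at most
`C_a (H/λ)² t^a` for every `t ∈ (ξ, d)`. Together, on each component,
`λ^{3q} ∫_{u ≥ 4λ} x^a ≤ C_a H^{2q} ∫_{λ < u < 4λ} t^a g^q`. Summing over the components and
over `λ = 4^k`, where the sets `{λ < u < 4λ}` are disjoint, gives
`∫ x^a u^{3q} ≤ 16^{3q} C_a H^{2q} ∫ x^a g^q`.
-/

open MeasureTheory Set
open scoped ENNReal

/-- The weighted Lebesgue norm `‖x^σ f‖_{L^p(0,∞)}`. -/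
noncomputable def wLp (σ : ℝ) (p : ℝ≥0∞) (f : ℝ → ℝ) : ℝ≥0∞ :=
  eLpNorm (fun x => x ^ σ * f x) p (volume.restrict (Set.Ioi 0))

theorem mul_sub_le_abs_sub_of_le_abs_deriv {f : ℝ → ℝ} {x y ε : ℝ} (hxy : x < y)
    (hfc : ContinuousOn f (Icc x y)) (hfd : DifferentiableOn ℝ f (Ioo x y))
    (hε : ∀ t ∈ Ioo x y, ε ≤ |deriv f t|) :
    ε * (y - x) ≤ |f y - f x| := by
  obtain ⟨c, hc, hslope⟩ := exists_deriv_eq_slope f hxy hfc hfd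
  have hyx : 0 < y - x := sub_pos.2 hxy
  calc ε * (y - x) ≤ |deriv f c| * (y - x) := by gcongr; exact hε c hc
    _ = |f y - f x| := by rw [hslope, abs_div, abs_of_pos hyx, div_mul_cancel₀ _ hyx.ne']

theorem le_sq_div_of_mul_le_mul_sqrt {L ε H : ℝ} (hL : 0 ≤ L) (hε : 0 < ε)
    (h : ε * L ≤ H * √L) : L ≤ (H / ε) ^ 2 := by
  rcases hL.eq_or_lt with rfl | hL
  · positivity
  have hs : 0 < √L := Real.sqrt_pos.2 hL
  have hεs : ε * √L ≤ H := by
    have := Real.mul_self_sqrt hL.le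
    nlinarith
  calc L = √L ^ 2 := (Real.sq_sqrt hL.le).symm
    _ ≤ (H / ε) ^ 2 := by gcongr; rw [le_div_iff₀ hε]; linarith

theorem sub_le_sq_div_of_holder_half {f : ℝ → ℝ} {H : ℝ} (hf : DifferentiableOn ℝ f (Ioi 0))
    (hHol : ∀ x ∈ Ioi (0 : ℝ), ∀ y ∈ Ioi (0 : ℝ), |f x - f y| ≤ H * √|x - y|)
    {ε x y : ℝ} (hε : 0 < ε) (hx : 0 < x) (hfx : ∀ t ∈ Icc x y, ε ≤ |deriv f t|) :
    y - x ≤ (H / ε) ^ 2 := by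
  rcases le_or_gt y x with hyx | hxy
  · linarith [sq_nonneg (H / ε)]
  have hsub : Icc x y ⊆ Ioi 0 := fun t ht => hx.trans_le ht.1
  refine le_sq_div_of_mul_le_mul_sqrt (by linarith) hε ?_
  calc ε * (y - x) ≤ |f y - f x| :=
        mul_sub_le_abs_sub_of_le_abs_deriv hxy (hf.continuousOn.mono hsub)
          (hf.mono (Ioo_subset_Icc_self.trans hsub)) fun t ht => hfx t (Ioo_subset_Icc_self ht)
    _ ≤ H * √(y - x) := by
        simpa [abs_of_pos (sub_pos.2 hxy)] using hHol y (hsub (right_mem_Icc.2 hxy.le)) x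
          (hsub (left_mem_Icc.2 hxy.le))

theorem abs_sub_abs_le_integral_abs_deriv {h : ℝ → ℝ} {s : Set ℝ} (hs : IsOpen s)
    (hh : ContDiffOn ℝ 1 h s) {x y : ℝ} (hxy : x ≤ y) (hsub : Icc x y ⊆ s) :
    |h x| - |h y| ≤ ∫ t in x..y, |deriv h t| := by
  rw [← uIcc_of_le hxy] at hsub
  have hd : ∀ t ∈ uIcc x y, DifferentiableAt ℝ h t := fun t ht =>
    (hh.differentiableOn one_ne_zero).differentiableAt (hs.mem_nhds (hsub ht))
  have hint : IntervalIntegrable (deriv h) volume x y :=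
    ((hh.continuousOn_deriv_of_isOpen hs le_rfl).mono hsub).intervalIntegrable
  calc |h x| - |h y| ≤ |h y - h x| := by
        rw [abs_sub_comm]; exact abs_sub_abs_le_abs_sub _ _
    _ = |∫ t in x..y, deriv h t| := by rw [intervalIntegral.integral_deriv_eq_sub hd hint]
    _ ≤ ∫ t in x..y, |deriv h t| := intervalIntegral.abs_integral_le_integral_abs hxy

theorem lintegral_rpow_le_measure_univ_rpow_mul {α : Type*} [MeasurableSpace α] {μ : Measure α}
    {F : α → ℝ≥0∞} (hF : AEMeasurable F μ) {q : ℝ} (hq : 1 ≤ q) :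
    (∫⁻ x, F x ∂μ) ^ q ≤ μ univ ^ (q - 1) * ∫⁻ x, F x ^ q ∂μ := by
  have hq0 : 0 < q := by linarith
  have h := eLpNorm'_le_eLpNorm'_mul_rpow_measure_univ one_pos hq hF.aestronglyMeasurable
  simp only [eLpNorm'_eq_lintegral_enorm, enorm_eq_self, ENNReal.rpow_one, div_one] at h
  calc (∫⁻ x, F x ∂μ) ^ q
      ≤ ((∫⁻ x, F x ^ q ∂μ) ^ (1 / q) * μ univ ^ (1 - 1 / q)) ^ q :=
        ENNReal.rpow_le_rpow h hq0.le
    _ = μ univ ^ (q - 1) * ∫⁻ x, F x ^ q ∂μ := by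
        rw [ENNReal.mul_rpow_of_nonneg _ _ hq0.le, ← ENNReal.rpow_mul, ← ENNReal.rpow_mul,
          one_div_mul_cancel hq0.ne', ENNReal.rpow_one, mul_comm, sub_mul,
          one_div_mul_cancel hq0.ne', one_mul]

theorem lintegral_ofReal_rpow_Ioc (a d : ℝ) (ha : -1 < a) (hd : 0 ≤ d) :
    ∫⁻ x in Ioc 0 d, ENNReal.ofReal (x ^ a) = ENNReal.ofReal (d ^ (a + 1) / (a + 1)) := by
  have hint : IntegrableOn (fun x : ℝ => x ^ a) (Ioc 0 d) :=
    (intervalIntegrable_iff_integrableOn_Ioc_of_le hd).1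
      (intervalIntegral.intervalIntegrable_rpow' ha)
  rw [← ofReal_integral_eq_lintegral_ofReal hint
      ((ae_restrict_iff' measurableSet_Ioc).2 (.of_forall fun x hx => Real.rpow_nonneg hx.1.le a)),
    ← intervalIntegral.integral_of_le hd, integral_rpow (Or.inl ha),
    Real.zero_rpow (by linarith), sub_zero]

/-- `2^(-a)`, `2/(a+1)` and `1` bound the `x^a`-measure of a plateau (relative to its length times
`t^a`) when `a < 0` and it is far from `0`, when `a < 0` and it is near `0`, and when `a ≥ 0`. -/
noncomputable def weightConst (a : ℝ) : ℝ := 2 ^ (-a) + 2 / (a + 1) + 1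

theorem one_le_weightConst {a : ℝ} (ha : -1 < a) : 1 ≤ weightConst a := by
  have : 0 < 2 / (a + 1) := div_pos two_pos (by linarith)
  unfold weightConst
  linarith [Real.rpow_pos_of_pos two_pos (-a)]

theorem lintegral_rpow_Ioc_inter_Ici_le {a s ξ d t : ℝ} (ha : -1 < a) (hs : 0 ≤ s) (hξ : 0 < ξ)
    (ht : t ∈ Icc ξ d) :
    ∫⁻ x in Ioc 0 ξ ∩ Ici (d - s), ENNReal.ofReal (x ^ a)
      ≤ ENNReal.ofReal (weightConst a * s * t ^ a) := by
  set A := Ioc 0 ξ ∩ Ici (d - s)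
  have ht0 : 0 < t := hξ.trans_le ht.1
  have hd0 : 0 < d := ht0.trans_le ht.2
  have hta : 0 < t ^ a := by positivity
  have hC : 0 ≤ weightConst a := zero_le_one.trans (one_le_weightConst ha)
  have hC₁ : 2 ^ (-a) ≤ weightConst a := by
    unfold weightConst; linarith [div_pos two_pos (by linarith : 0 < a + 1)]
  have hC₂ : 2 / (a + 1) ≤ weightConst a := by
    unfold weightConst; linarith [Real.rpow_pos_of_pos two_pos (-a)]
  have bound : ∀ c, (∀ x ∈ A, x ^ a ≤ c) → c ≤ weightConst a * t ^ a →
      ∫⁻ x in A, ENNReal.ofReal (x ^ a) ≤ ENNReal.ofReal (weightConst a * s * t ^ a) := by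
    intro c hc hcC
    have hvol : volume A ≤ ENNReal.ofReal s :=
      calc volume A ≤ volume (Icc (d - s) ξ) := measure_mono fun x hx => ⟨hx.2, hx.1.2⟩
        _ ≤ ENNReal.ofReal s := by rw [Real.volume_Icc]; gcongr; linarith [ht.1, ht.2]
    calc ∫⁻ x in A, ENNReal.ofReal (x ^ a) ≤ ∫⁻ _ in A, ENNReal.ofReal c :=
          setLIntegral_mono' (measurableSet_Ioc.inter measurableSet_Ici)
            fun x hx => ENNReal.ofReal_le_ofReal (hc x hx)
      _ ≤ ENNReal.ofReal c * ENNReal.ofReal s := by rw [setLIntegral_const]; gcongr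
      _ ≤ _ := by
        rw [← ENNReal.ofReal_mul' hs]
        exact ENNReal.ofReal_le_ofReal (by nlinarith)
  rcases le_or_gt 0 a with ha0 | ha0
  · refine bound (t ^ a) (fun x hx => Real.rpow_le_rpow hx.1.1.le (hx.1.2.trans ht.1) ha0) ?_
    nlinarith [one_le_weightConst ha]
  have hdt : d ^ a ≤ t ^ a := Real.rpow_le_rpow_of_nonpos ht0 ht.2 ha0.le
  have hda : 0 < d ^ a := by positivity
  rcases le_or_gt (2 * s) d with hsd | hsd
  · refine bound (2 ^ (-a) * d ^ a) (fun x hx => ?_) (by gcongr)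
    calc x ^ a ≤ (d / 2) ^ a :=
          Real.rpow_le_rpow_of_nonpos (by positivity) (by linarith [hx.2.out]) ha0.le
      _ = 2 ^ (-a) * d ^ a := by
          rw [Real.div_rpow hd0.le zero_le_two, Real.rpow_neg zero_le_two, div_eq_inv_mul]
  · calc ∫⁻ x in A, ENNReal.ofReal (x ^ a) ≤ ∫⁻ x in Ioc 0 d, ENNReal.ofReal (x ^ a) :=
          lintegral_mono_set fun x hx => ⟨hx.1.1, hx.1.2.trans (ht.1.trans ht.2)⟩
      _ = ENNReal.ofReal (d ^ (a + 1) / (a + 1)) := lintegral_ofReal_rpow_Ioc a d ha hd0.le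
      _ ≤ _ := by
        refine ENNReal.ofReal_le_ofReal ?_
        rw [Real.rpow_add_one hd0.ne', div_le_iff₀ (by linarith)]
        calc d ^ a * d ≤ 2 / (a + 1) * s * d ^ a * (a + 1) := by
              rw [mul_comm _ (a + 1), ← mul_assoc, ← mul_assoc, mul_div_cancel₀ _ (by linarith)]
              nlinarith
          _ ≤ _ := by gcongr; linarith

theorem ofReal_rpow_le_of_le_integral {g : ℝ → ℝ} {lam q ξ d : ℝ}
    (hg : ContinuousOn g (Icc ξ d)) (hg0 : ∀ t ∈ Ioo ξ d, 0 ≤ g t) (hq : 1 ≤ q) (hξd : ξ ≤ d)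
    (hmass : lam ≤ ∫ t in ξ..d, g t) :
    ENNReal.ofReal lam ^ q
      ≤ ENNReal.ofReal (d - ξ) ^ (q - 1) * ∫⁻ t in Ioo ξ d, ENNReal.ofReal (g t ^ q) := by
  have hgi : IntegrableOn g (Ioo ξ d) := hg.integrableOn_Icc.mono_set Ioo_subset_Icc_self
  have hmass' : ENNReal.ofReal lam ≤ ∫⁻ t in Ioo ξ d, ENNReal.ofReal (g t) := by
    rw [intervalIntegral.integral_of_le hξd, integral_Ioc_eq_integral_Ioo] at hmass
    rw [← ofReal_integral_eq_lintegral_ofReal hgi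
      ((ae_restrict_iff' measurableSet_Ioo).2 (.of_forall hg0))]
    exact ENNReal.ofReal_le_ofReal hmass
  calc ENNReal.ofReal lam ^ q ≤ (∫⁻ t in Ioo ξ d, ENNReal.ofReal (g t)) ^ q :=
        ENNReal.rpow_le_rpow hmass' (by linarith)
    _ ≤ ENNReal.ofReal (d - ξ) ^ (q - 1) * ∫⁻ t in Ioo ξ d, ENNReal.ofReal (g t) ^ q := by
        simpa [Real.volume_Ioo] using lintegral_rpow_le_measure_univ_rpow_mul
          hgi.aemeasurable.ennreal_ofReal hq
    _ = _ := by
        congr 1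
        exact setLIntegral_congr_fun measurableSet_Ioo fun t ht =>
          ENNReal.ofReal_rpow_of_nonneg (hg0 t ht) (by linarith)

theorem ofReal_rpow_mul_lintegral_Ioc_inter_Ici_le {g : ℝ → ℝ} {a q H lam ξ d : ℝ}
    (hg : ContinuousOn g (Icc ξ d)) (hg0 : ∀ t ∈ Ioo ξ d, 0 ≤ g t)
    (ha : -1 < a) (hq : 1 ≤ q) (hH : 0 ≤ H) (hlam : 0 < lam) (hξ : 0 < ξ) (hξd : ξ ≤ d)
    (hlen : d - ξ ≤ (H / lam) ^ 2) (hmass : lam ≤ ∫ t in ξ..d, g t) :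
    ENNReal.ofReal (lam ^ (3 * q))
        * ∫⁻ x in Ioc 0 ξ ∩ Ici (d - (H / lam) ^ 2), ENNReal.ofReal (x ^ a)
      ≤ ENNReal.ofReal (weightConst a) * ENNReal.ofReal H ^ (2 * q)
        * ∫⁻ t in Ioo ξ d, ENNReal.ofReal (t ^ a * g t ^ q) := by
  set s := (H / lam) ^ 2
  set W := ∫⁻ x in Ioc 0 ξ ∩ Ici (d - s), ENNReal.ofReal (x ^ a)
  set G := ∫⁻ t in Ioo ξ d, ENNReal.ofReal (g t ^ q)
  set X := ∫⁻ t in Ioo ξ d, ENNReal.ofReal (t ^ a * g t ^ q)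
  have hq0 : 0 ≤ q := by linarith
  have hs : 0 ≤ s := by positivity
  have hC : 0 ≤ weightConst a := zero_le_one.trans (one_le_weightConst ha)
  have holder : ENNReal.ofReal lam ^ q ≤ ENNReal.ofReal s ^ (q - 1) * G :=
    (ofReal_rpow_le_of_le_integral hg hg0 hq hξd hmass).trans (by gcongr)
  have weight : W * G ≤ ENNReal.ofReal (weightConst a * s) * X := by
    rw [← lintegral_const_mul' _ _ ENNReal.ofReal_ne_top]
    refine (lintegral_const_mul_le _ _).trans (setLIntegral_mono' measurableSet_Ioo fun t ht => ?_)
    have ht0 : 0 < t := hξ.trans ht.1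
    calc W * ENNReal.ofReal (g t ^ q)
        ≤ ENNReal.ofReal (weightConst a * s * t ^ a) * ENNReal.ofReal (g t ^ q) := by
          gcongr; exact lintegral_rpow_Ioc_inter_Ici_le ha hs hξ (Ioo_subset_Icc_self ht)
      _ = _ := by
          rw [← ENNReal.ofReal_mul (by positivity), ← ENNReal.ofReal_mul (by positivity), mul_assoc]
  have scaling : lam ^ (2 * q) * (s ^ (q - 1) * s) = H ^ (2 * q) := by
    rw [← Real.rpow_add_one' hs (by linarith), sub_add_cancel, Real.rpow_mul hlam.le,
      Real.rpow_mul hH, ← Real.mul_rpow (by positivity) hs]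
    congr 1
    simp only [s, Real.rpow_two]; field_simp
  calc ENNReal.ofReal (lam ^ (3 * q)) * W
      = ENNReal.ofReal (lam ^ (2 * q)) * (ENNReal.ofReal lam ^ q * W) := by
        rw [ENNReal.ofReal_rpow_of_nonneg hlam.le hq0, ← mul_assoc,
          ← ENNReal.ofReal_mul (by positivity), ← Real.rpow_add hlam]
        ring_nf
    _ ≤ ENNReal.ofReal (lam ^ (2 * q)) * (ENNReal.ofReal s ^ (q - 1) * (W * G)) := by
        refine mul_le_mul_right ?_ _
        calc ENNReal.ofReal lam ^ q * W ≤ ENNReal.ofReal s ^ (q - 1) * G * W := by gcongr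
          _ = _ := by ring
    _ ≤ ENNReal.ofReal (lam ^ (2 * q))
          * (ENNReal.ofReal s ^ (q - 1) * (ENNReal.ofReal (weightConst a * s) * X)) := by gcongr
    _ = _ := by
        rw [ENNReal.ofReal_rpow_of_nonneg hH (by linarith),
          ENNReal.ofReal_rpow_of_nonneg hs (by linarith), ← scaling, ← ENNReal.ofReal_mul hC,
          ← mul_assoc, ← mul_assoc, ← ENNReal.ofReal_mul (by positivity),
          ← ENNReal.ofReal_mul (by positivity)]
        ring_nf

theorem csSup_connectedComponentIn_notMem {U : Set ℝ} (hU : IsOpen U) {z : ℝ} (hz : z ∈ U)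
    (hbdd : BddAbove (connectedComponentIn U z)) :
    sSup (connectedComponentIn U z) ∉ U := by
  set I := connectedComponentIn U z
  intro hd
  obtain ⟨ε, hε, hball⟩ := Metric.isOpen_iff.1 hU _ hd
  obtain ⟨x, hxI, hx⟩ := exists_lt_of_lt_csSup ⟨z, mem_connectedComponentIn hz⟩
    (sub_lt_self (sSup I) hε)
  have hxball : x ∈ Metric.ball (sSup I) ε := by
    rw [Metric.mem_ball, Real.dist_eq, abs_sub_comm,
      abs_of_nonneg (by linarith [le_csSup hbdd hxI])]
    linarith
  have hsub : I ∪ Metric.ball (sSup I) ε ⊆ I :=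
    (isPreconnected_connectedComponentIn.union x hxI hxball
      (Metric.isConnected_ball hε).isPreconnected).subset_connectedComponentIn
      (Or.inl (mem_connectedComponentIn hz)) (union_subset (connectedComponentIn_subset _ _) hball)
  have : sSup I + ε / 2 ∈ I := hsub (Or.inr (by
    rw [Metric.mem_ball, Real.dist_eq, add_sub_cancel_left, abs_of_pos (by linarith)]; linarith))
  linarith [le_csSup hbdd this]

section Levels

variable {u : ℝ → ℝ} {H lam : ℝ}

theorem connectedComponentIn_superlevel_subset (hu : ContinuousOn u (Ioi 0))
    (hlen : ∀ ε x y, 0 < ε → 0 < x → (∀ t ∈ Icc x y, ε ≤ u t) → y - x ≤ (H / ε) ^ 2)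
    (hlam : 0 < lam) {z : ℝ} (hz : z ∈ Ioi 0 ∩ u ⁻¹' Ioi lam) :
    ∃ d, z ≤ d ∧ u d ≤ lam ∧ Ico z d ⊆ connectedComponentIn (Ioi 0 ∩ u ⁻¹' Ioi lam) z ∧
      connectedComponentIn (Ioi 0 ∩ u ⁻¹' Ioi lam) z ⊆ Icc (d - (H / lam) ^ 2) d := by
  set E := Ioi 0 ∩ u ⁻¹' Ioi lam
  set I := connectedComponentIn E z
  have hzI : z ∈ I := mem_connectedComponentIn hz
  have hIE : I ⊆ E := connectedComponentIn_subset E z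
  have hIoc : I.OrdConnected := isPreconnected_connectedComponentIn.ordConnected
  have width : ∀ x ∈ I, ∀ y ∈ I, y ≤ x + (H / lam) ^ 2 := by
    intro x hx y hy
    rcases le_or_gt y x with hyx | hxy
    · linarith [sq_nonneg (H / lam)]
    · have := hlen lam x y hlam (hIE hx).1 fun t ht => (hIE (hIoc.out hx hy ht)).2.out.le
      linarith
  have hbdd : BddAbove I := ⟨z + (H / lam) ^ 2, width z hzI⟩
  have hzd : z ≤ sSup I := le_csSup hbdd hzI
  refine ⟨sSup I, hzd, ?_, fun t ht => ?_, fun x hx => ⟨?_, le_csSup hbdd hx⟩⟩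
  · have hd := csSup_connectedComponentIn_notMem
      (hu.isOpen_inter_preimage isOpen_Ioi isOpen_Ioi) hz hbdd
    by_contra h
    exact hd ⟨lt_of_lt_of_le hz.1 hzd, lt_of_not_ge h⟩
  · obtain ⟨y, hyI, hty⟩ := exists_lt_of_lt_csSup ⟨z, hzI⟩ ht.2
    exact hIoc.out hzI hyI ⟨ht.1, hty.le⟩
  · linarith [csSup_le ⟨z, hzI⟩ fun y hy => width x hx y hy]

theorem exists_descent_interval (hu : ContinuousOn u (Ioi 0))
    (hlen : ∀ ε x y, 0 < ε → 0 < x → (∀ t ∈ Icc x y, ε ≤ u t) → y - x ≤ (H / ε) ^ 2)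
    (hlam : 0 < lam) {z : ℝ} (hz : 0 < z) (hz4 : 4 * lam ≤ u z) :
    ∃ ξ d, 0 < ξ ∧ ξ < d ∧ d - ξ ≤ (H / lam) ^ 2 ∧ 4 * lam ≤ u ξ ∧ u d ≤ lam ∧
      Ioo ξ d ⊆ connectedComponentIn (Ioi 0 ∩ u ⁻¹' Ioi lam) z ∩ u ⁻¹' Iio (4 * lam) ∧
      connectedComponentIn (Ioi 0 ∩ u ⁻¹' Ioi lam) z ∩ u ⁻¹' Ici (4 * lam)
        ⊆ Ioc 0 ξ ∩ Ici (d - (H / lam) ^ 2) := by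
  set I := connectedComponentIn (Ioi 0 ∩ u ⁻¹' Ioi lam) z
  have hzE : z ∈ Ioi 0 ∩ u ⁻¹' Ioi lam := ⟨hz, by simp only [mem_preimage, mem_Ioi]; linarith⟩
  obtain ⟨d, hzd, hud, hIco, hIcc⟩ := connectedComponentIn_superlevel_subset hu hlen hlam hzE
  set T := Icc z d ∩ u ⁻¹' Ici (4 * lam)
  have hT : IsClosed T := (hu.mono fun t ht => hz.trans_le ht.1).preimage_isClosed_of_isClosed
    isClosed_Icc isClosed_Ici
  have hTbdd : BddAbove T := ⟨d, fun t ht => ht.1.2⟩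
  obtain ⟨⟨hzξ, hξd⟩, huξ⟩ := hT.csSup_mem ⟨z, ⟨le_rfl, hzd⟩, hz4⟩ hTbdd
  set ξ := sSup T
  have hξd' : ξ < d := lt_of_le_of_ne hξd fun h => by
    rw [h] at huξ; simp only [mem_preimage, mem_Ici] at huξ; linarith
  have hξI : ξ ∈ I := hIco ⟨hzξ, hξd'⟩
  have below : ∀ x ∈ I, 4 * lam ≤ u x → x ≤ ξ := fun x hx hx4 =>
    (le_or_gt x z).elim (fun h => h.trans hzξ) fun h => le_csSup hTbdd ⟨⟨h.le, (hIcc hx).2⟩, hx4⟩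
  refine ⟨ξ, d, hz.trans_le hzξ, hξd', by linarith [(hIcc hξI).1], huξ, hud,
    fun t ht => ⟨hIco ⟨hzξ.trans ht.1.le, ht.2⟩, ?_⟩,
    fun x hx => ⟨⟨?_, below x hx.1 hx.2⟩, (hIcc hx.1).1⟩⟩
  · by_contra h
    exact absurd (below t (hIco ⟨hzξ.trans ht.1.le, ht.2⟩) (le_of_not_gt h)) (not_le.2 ht.1)
  · exact (connectedComponentIn_subset _ _ hx.1).1

variable {g : ℝ → ℝ} {a q : ℝ}

theorem lintegral_connectedComponentIn_le (hu : ContinuousOn u (Ioi 0))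
    (hg : ContinuousOn g (Ioi 0)) (hg0 : ∀ t ∈ Ioi 0, 0 ≤ g t)
    (hlen : ∀ ε x y, 0 < ε → 0 < x → (∀ t ∈ Icc x y, ε ≤ u t) → y - x ≤ (H / ε) ^ 2)
    (hvar : ∀ x y, 0 < x → x ≤ y → u x - u y ≤ ∫ t in x..y, g t)
    (ha : -1 < a) (hq : 1 ≤ q) (hH : 0 ≤ H) (hlam : 0 < lam) (z : ℝ) :
    ENNReal.ofReal (lam ^ (3 * q)) * ∫⁻ x in connectedComponentIn (Ioi 0 ∩ u ⁻¹' Ioi lam) z ∩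
        u ⁻¹' Ici (4 * lam), ENNReal.ofReal (x ^ a)
      ≤ ENNReal.ofReal (weightConst a) * ENNReal.ofReal H ^ (2 * q)
        * ∫⁻ t in connectedComponentIn (Ioi 0 ∩ u ⁻¹' Ioi lam) z ∩ u ⁻¹' Iio (4 * lam),
            ENNReal.ofReal (t ^ a * g t ^ q) := by
  rcases (connectedComponentIn (Ioi 0 ∩ u ⁻¹' Ioi lam) z ∩ u ⁻¹' Ici (4 * lam)).eq_empty_or_nonempty
    with h | ⟨w, hwI, hw4⟩
  · simp [h]
  rw [connectedComponentIn_eq hwI] at *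
  have hw0 : 0 < w := (connectedComponentIn_subset _ _ hwI).1
  obtain ⟨ξ, d, hξ, hξd, hlen', huξ, hud, hIoo, hplateau⟩ :=
    exists_descent_interval hu hlen hlam hw0 hw4
  have hsub : Icc ξ d ⊆ Ioi 0 := fun t ht => hξ.trans_le ht.1
  have hmass : lam ≤ ∫ t in ξ..d, g t := by
    linarith [hvar ξ d hξ hξd.le]
  calc _ ≤ ENNReal.ofReal (lam ^ (3 * q))
        * ∫⁻ x in Ioc 0 ξ ∩ Ici (d - (H / lam) ^ 2), ENNReal.ofReal (x ^ a) := by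
        gcongr
    _ ≤ ENNReal.ofReal (weightConst a) * ENNReal.ofReal H ^ (2 * q)
        * ∫⁻ t in Ioo ξ d, ENNReal.ofReal (t ^ a * g t ^ q) :=
        ofReal_rpow_mul_lintegral_Ioc_inter_Ici_le (hg.mono hsub)
          (fun t ht => hg0 t (hsub (Ioo_subset_Icc_self ht))) ha hq hH hlam hξ hξd.le hlen' hmass
    _ ≤ _ := by gcongr

theorem lintegral_superlevel_le (hu : ContinuousOn u (Ioi 0))
    (hg : ContinuousOn g (Ioi 0)) (hg0 : ∀ t ∈ Ioi 0, 0 ≤ g t)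
    (hlen : ∀ ε x y, 0 < ε → 0 < x → (∀ t ∈ Icc x y, ε ≤ u t) → y - x ≤ (H / ε) ^ 2)
    (hvar : ∀ x y, 0 < x → x ≤ y → u x - u y ≤ ∫ t in x..y, g t)
    (ha : -1 < a) (hq : 1 ≤ q) (hH : 0 ≤ H) (hlam : 0 < lam) :
    ENNReal.ofReal (lam ^ (3 * q)) * ∫⁻ x in Ioi 0 ∩ u ⁻¹' Ici (4 * lam), ENNReal.ofReal (x ^ a)
      ≤ ENNReal.ofReal (weightConst a) * ENNReal.ofReal H ^ (2 * q)
        * ∫⁻ t in Ioi 0 ∩ u ⁻¹' Ioo lam (4 * lam), ENNReal.ofReal (t ^ a * g t ^ q) := by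
  set E := Ioi 0 ∩ u ⁻¹' Ioi lam
  have hE : IsOpen E := hu.isOpen_inter_preimage isOpen_Ioi isOpen_Ioi
  set 𝒞 := connectedComponentIn E '' E
  have h𝒞open : ∀ I ∈ 𝒞, IsOpen I := by
    rintro _ ⟨z, -, rfl⟩; exact hE.connectedComponentIn
  have h𝒞E : ∀ I ∈ 𝒞, I ⊆ E := by
    rintro _ ⟨z, -, rfl⟩; exact connectedComponentIn_subset E z
  have h𝒞disj : 𝒞.PairwiseDisjoint id := by
    rintro _ ⟨z, -, rfl⟩ _ ⟨w, -, rfl⟩ hzw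
    refine disjoint_left.2 fun t htz htw => hzw ?_
    rw [connectedComponentIn_eq htz, connectedComponentIn_eq htw]
  have : Countable 𝒞 := (h𝒞disj.countable_of_isOpen h𝒞open
    (by rintro _ ⟨z, hz, rfl⟩; exact ⟨z, mem_connectedComponentIn hz⟩)).to_subtype
  set K := ENNReal.ofReal (weightConst a) * ENNReal.ofReal H ^ (2 * q)
  set G := fun t => ENNReal.ofReal (t ^ a * g t ^ q)
  have hcover : Ioi 0 ∩ u ⁻¹' Ici (4 * lam) ⊆ ⋃ I : 𝒞, (I : Set ℝ) ∩ u ⁻¹' Ici (4 * lam) := by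
    intro x hx
    have hx4 : 4 * lam ≤ u x := hx.2
    have hxE : x ∈ E := ⟨hx.1, show lam < u x by linarith⟩
    exact mem_iUnion.2 ⟨⟨_, x, hxE, rfl⟩, mem_connectedComponentIn hxE, hx.2⟩
  calc ENNReal.ofReal (lam ^ (3 * q)) * ∫⁻ x in Ioi 0 ∩ u ⁻¹' Ici (4 * lam), ENNReal.ofReal (x ^ a)
      ≤ ENNReal.ofReal (lam ^ (3 * q)) * ∑' I : 𝒞, ∫⁻ x in (I : Set ℝ) ∩ u ⁻¹' Ici (4 * lam),
          ENNReal.ofReal (x ^ a) := by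
        gcongr; exact (lintegral_mono_set hcover).trans (lintegral_iUnion_le _ _)
    _ = ∑' I : 𝒞, ENNReal.ofReal (lam ^ (3 * q)) * ∫⁻ x in (I : Set ℝ) ∩ u ⁻¹' Ici (4 * lam),
          ENNReal.ofReal (x ^ a) := ENNReal.tsum_mul_left.symm
    _ ≤ ∑' I : 𝒞, K * ∫⁻ t in (I : Set ℝ) ∩ u ⁻¹' Iio (4 * lam), G t := by
        refine ENNReal.tsum_le_tsum fun I => ?_
        obtain ⟨_, ⟨z, -, rfl⟩⟩ := I
        exact lintegral_connectedComponentIn_le hu hg hg0 hlen hvar ha hq hH hlam z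
    _ = K * ∫⁻ t in ⋃ I : 𝒞, (I : Set ℝ) ∩ u ⁻¹' Iio (4 * lam), G t := by
        rw [ENNReal.tsum_mul_left, lintegral_iUnion]
        · exact fun I => ((hu.mono ((h𝒞E I I.2).trans inter_subset_left)).isOpen_inter_preimage
            (h𝒞open I I.2) isOpen_Iio).measurableSet
        · exact fun I J hIJ => (h𝒞disj I.2 J.2 (Subtype.coe_injective.ne hIJ)).mono
            inter_subset_left inter_subset_left
    _ ≤ _ := by
        gcongr
        refine iUnion_subset fun I t ht => ?_
        obtain ⟨ht0, htlam⟩ := h𝒞E I I.2 ht.1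
        exact ⟨ht0, htlam, ht.2⟩

theorem lintegral_shell_le (hu : ContinuousOn u (Ioi 0))
    (hg : ContinuousOn g (Ioi 0)) (hg0 : ∀ t ∈ Ioi 0, 0 ≤ g t)
    (hlen : ∀ ε x y, 0 < ε → 0 < x → (∀ t ∈ Icc x y, ε ≤ u t) → y - x ≤ (H / ε) ^ 2)
    (hvar : ∀ x y, 0 < x → x ≤ y → u x - u y ≤ ∫ t in x..y, g t)
    (ha : -1 < a) (hq : 1 ≤ q) (hH : 0 ≤ H) (hlam : 0 < lam) :
    ∫⁻ x in Ioi 0 ∩ u ⁻¹' Ico (4 * lam) (16 * lam), ENNReal.ofReal (x ^ a * u x ^ (3 * q))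
      ≤ ENNReal.ofReal (16 ^ (3 * q) * weightConst a) * ENNReal.ofReal H ^ (2 * q)
        * ∫⁻ t in Ioi 0 ∩ u ⁻¹' Ioo lam (4 * lam), ENNReal.ofReal (t ^ a * g t ^ q) := by
  have h16 : 0 ≤ (16 : ℝ) ^ (3 * q) := by positivity
  calc ∫⁻ x in Ioi 0 ∩ u ⁻¹' Ico (4 * lam) (16 * lam), ENNReal.ofReal (x ^ a * u x ^ (3 * q))
      ≤ ∫⁻ x in Ioi 0 ∩ u ⁻¹' Ico (4 * lam) (16 * lam),
          ENNReal.ofReal (16 ^ (3 * q))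
            * (ENNReal.ofReal (lam ^ (3 * q)) * ENNReal.ofReal (x ^ a)) := by
        refine setLIntegral_mono (by fun_prop) fun x ⟨hx, hux⟩ => ?_
        rw [← ENNReal.ofReal_mul (Real.rpow_nonneg hlam.le _), ← ENNReal.ofReal_mul h16,
          ← mul_assoc, ← Real.mul_rpow (by norm_num) hlam.le, mul_comm]
        exact ENNReal.ofReal_le_ofReal (mul_le_mul_of_nonneg_right
          (Real.rpow_le_rpow (by linarith [hux.1]) hux.2.le (by linarith))
          (Real.rpow_nonneg hx.out.le _))
    _ ≤ ENNReal.ofReal (16 ^ (3 * q)) * (ENNReal.ofReal (lam ^ (3 * q))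
          * ∫⁻ x in Ioi 0 ∩ u ⁻¹' Ici (4 * lam), ENNReal.ofReal (x ^ a)) := by
        rw [lintegral_const_mul' _ _ ENNReal.ofReal_ne_top,
          lintegral_const_mul' _ _ ENNReal.ofReal_ne_top]
        gcongr
        exact Ico_subset_Ici_self
    _ ≤ ENNReal.ofReal (16 ^ (3 * q)) * (ENNReal.ofReal (weightConst a) * ENNReal.ofReal H ^ (2 * q)
          * ∫⁻ t in Ioi 0 ∩ u ⁻¹' Ioo lam (4 * lam), ENNReal.ofReal (t ^ a * g t ^ q)) := by
        exact mul_le_mul_right (lintegral_superlevel_le hu hg hg0 hlen hvar ha hq hH hlam) _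
    _ = _ := by rw [ENNReal.ofReal_mul h16]; ring

theorem lintegral_rpow_mul_rpow_le (hu : ContinuousOn u (Ioi 0)) (hu0 : ∀ x ∈ Ioi 0, 0 ≤ u x)
    (hg : ContinuousOn g (Ioi 0)) (hg0 : ∀ t ∈ Ioi 0, 0 ≤ g t)
    (hlen : ∀ ε x y, 0 < ε → 0 < x → (∀ t ∈ Icc x y, ε ≤ u t) → y - x ≤ (H / ε) ^ 2)
    (hvar : ∀ x y, 0 < x → x ≤ y → u x - u y ≤ ∫ t in x..y, g t)
    (ha : -1 < a) (hq : 1 ≤ q) (hH : 0 ≤ H) :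
    ∫⁻ x in Ioi 0, ENNReal.ofReal (x ^ a * u x ^ (3 * q))
      ≤ ENNReal.ofReal (16 ^ (3 * q) * weightConst a) * ENNReal.ofReal H ^ (2 * q)
        * ∫⁻ t in Ioi 0, ENNReal.ofReal (t ^ a * g t ^ q) := by
  set K := ENNReal.ofReal (16 ^ (3 * q) * weightConst a) * ENNReal.ofReal H ^ (2 * q)
  set G := fun t => ENNReal.ofReal (t ^ a * g t ^ q)
  set S := fun k : ℤ => Ioi 0 ∩ u ⁻¹' Ico (4 * 4 ^ k) (16 * 4 ^ k)
  set V := fun k : ℤ => Ioi 0 ∩ u ⁻¹' Ioo (4 ^ k) (4 * 4 ^ k)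
  have hpow : ∀ k : ℤ, (4 : ℝ) ^ (k + 1) = 4 * 4 ^ k := fun k => by
    rw [zpow_add_one₀ (by norm_num), mul_comm]
  have hP : MeasurableSet (Ioi 0 ∩ u ⁻¹' Ioi 0) :=
    (hu.isOpen_inter_preimage isOpen_Ioi isOpen_Ioi).measurableSet
  have hcover : Ioi 0 ∩ (Ioi 0 ∩ u ⁻¹' Ioi 0) ⊆ ⋃ k, S k := fun x hx => by
    obtain ⟨n, hn⟩ := exists_mem_Ico_zpow hx.2.2.out (by norm_num : (1 : ℝ) < 4)
    refine mem_iUnion.2 ⟨n - 1, hx.1, ?_⟩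
    have h1 := hpow (n - 1); have h2 := hpow n
    rw [sub_add_cancel] at h1
    exact ⟨by linarith [hn.1], by linarith [hn.2]⟩
  have hVdisj := (pairwise_disjoint_on V).2 fun m n hmn =>
    disjoint_left.2 fun t htm htn => by
      have : (4 : ℝ) ^ (m + 1) ≤ 4 ^ n := zpow_le_zpow_right₀ (by norm_num) (by omega)
      linarith [htm.2.2, htn.2.1, hpow m]
  calc ∫⁻ x in Ioi 0, ENNReal.ofReal (x ^ a * u x ^ (3 * q))
      = ∫⁻ x in Ioi 0 ∩ (Ioi 0 ∩ u ⁻¹' Ioi 0), ENNReal.ofReal (x ^ a * u x ^ (3 * q)) := by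
        rw [← lintegral_inter_add_sdiff _ _ hP, setLIntegral_eq_zero (measurableSet_Ioi.diff hP),
          add_zero]
        intro x ⟨hx, hxP⟩
        have : u x = 0 := le_antisymm (not_lt.1 fun h => hxP ⟨hx, h⟩) (hu0 x hx)
        simp [this, Real.zero_rpow (by positivity : 3 * q ≠ 0)]
    _ ≤ ∑' k, ∫⁻ x in S k, ENNReal.ofReal (x ^ a * u x ^ (3 * q)) :=
        (lintegral_mono_set hcover).trans (lintegral_iUnion_le _ _)
    _ ≤ ∑' k, K * ∫⁻ t in V k, G t := ENNReal.tsum_le_tsum fun k =>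
        lintegral_shell_le hu hg hg0 hlen hvar ha hq hH (by positivity)
    _ = K * ∫⁻ t in ⋃ k, V k, G t := by
        rw [ENNReal.tsum_mul_left, lintegral_iUnion (fun k =>
          (hu.isOpen_inter_preimage isOpen_Ioi isOpen_Ioo).measurableSet) hVdisj]
    _ ≤ K * ∫⁻ t in Ioi 0, G t := by gcongr; exact iUnion_subset fun k => inter_subset_left

end Levels

theorem lintegral_rpow_abs_deriv_le {f : ℝ → ℝ} {H a q : ℝ} (hf : ContDiffOn ℝ 2 f (Ioi 0))
    (hH : 0 ≤ H) (hHol : ∀ x ∈ Ioi (0 : ℝ), ∀ y ∈ Ioi (0 : ℝ), |f x - f y| ≤ H * √|x - y|)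
    (ha : -1 < a) (hq : 1 ≤ q) :
    ∫⁻ x in Ioi 0, ENNReal.ofReal (x ^ a * |deriv f x| ^ (3 * q))
      ≤ ENNReal.ofReal (16 ^ (3 * q) * weightConst a) * ENNReal.ofReal H ^ (2 * q)
        * ∫⁻ t in Ioi 0, ENNReal.ofReal (t ^ a * |deriv (deriv f) t| ^ q) := by
  have hf' : ContDiffOn ℝ 1 (deriv f) (Ioi 0) := hf.deriv_of_isOpen isOpen_Ioi (by norm_num)
  exact lintegral_rpow_mul_rpow_le hf'.continuousOn.abs (fun _ _ => abs_nonneg _)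
    (hf'.continuousOn_deriv_of_isOpen isOpen_Ioi le_rfl).abs (fun _ _ => abs_nonneg _)
    (fun ε x y hε hx => sub_le_sq_div_of_holder_half (hf.differentiableOn two_ne_zero) hHol hε hx)
    (fun x y hx hxy => abs_sub_abs_le_integral_abs_deriv isOpen_Ioi hf' hxy
      fun t ht => hx.trans_le ht.1)
    ha hq hH

theorem rpow_le_rpow_mul_rpow_mul_of_le {X Y K H : ℝ≥0∞} {q : ℝ} (hq : 0 < q)
    (h : X ≤ K * H ^ (2 * q) * Y) :
    X ^ (1 / (3 * q)) ≤ K ^ (1 / (3 * q)) * H ^ (2 / 3 : ℝ) * (Y ^ (1 / q)) ^ (1 / 3 : ℝ) := by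
  calc X ^ (1 / (3 * q)) ≤ (K * H ^ (2 * q) * Y) ^ (1 / (3 * q)) :=
        ENNReal.rpow_le_rpow h (by positivity)
    _ = _ := by
      rw [ENNReal.mul_rpow_of_nonneg _ _ (by positivity),
        ENNReal.mul_rpow_of_nonneg _ _ (by positivity), ← ENNReal.rpow_mul, ← ENNReal.rpow_mul]
      congr 3 <;> field_simp

theorem wLp_eq_lintegral {σ : ℝ} {p : ℝ≥0∞} (hp0 : p ≠ 0) (hp : p ≠ ⊤) (f : ℝ → ℝ) :
    wLp σ p f = (∫⁻ x in Ioi 0, ENNReal.ofReal (x ^ (σ * p.toReal) * |f x| ^ p.toReal))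
      ^ (1 / p.toReal) := by
  rw [wLp, eLpNorm_eq_lintegral_rpow_enorm_toReal hp0 hp]
  congr 1
  refine setLIntegral_congr_fun measurableSet_Ioi fun x hx => ?_
  have hσ : 0 < x ^ σ := Real.rpow_pos_of_pos hx σ
  rw [Real.enorm_eq_ofReal_abs, ENNReal.ofReal_rpow_of_nonneg (abs_nonneg _) ENNReal.toReal_nonneg,
    abs_mul, abs_of_pos hσ, Real.mul_rpow hσ.le (abs_nonneg _), ← Real.rpow_mul hx.out.le]

theorem weighted_interpolation_holder_half_general
    (p₁ : ℝ≥0∞) (σ₁ σ₂ : ℝ)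
    (hp₁ : 3 ≤ p₁) (hp₁top : p₁ ≠ ⊤)
    (hσrel : σ₂ = 3 * σ₁)
    (hσ₁ : -(1 / p₁).toReal < σ₁) :
    ∃ C : ℝ≥0∞, C ≠ ⊤ ∧ ∀ f : ℝ → ℝ, ContDiffOn ℝ 2 f (Set.Ioi 0) →
      ∀ H : ℝ, 0 ≤ H →
      (∀ x ∈ Set.Ioi (0:ℝ), ∀ y ∈ Set.Ioi (0:ℝ),
        |f x - f y| ≤ H * Real.sqrt |x - y|) →
      wLp σ₂ (p₁ / 3) (deriv (deriv f)) < ⊤ →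
      wLp σ₁ p₁ (deriv f)
        ≤ C * ENNReal.ofReal H ^ (2/3 : ℝ) *
            wLp σ₂ (p₁ / 3) (deriv (deriv f)) ^ (1/3 : ℝ) := by
  have hp₁0 : p₁ ≠ 0 := (lt_of_lt_of_le (by norm_num) hp₁).ne'
  simp only [wLp_eq_lintegral hp₁0 hp₁top,
    wLp_eq_lintegral (p := p₁ / 3) (by simp [hp₁0]) (ENNReal.div_ne_top hp₁top (by norm_num))]
  set q := (p₁ / 3).toReal
  have hpq : p₁.toReal = 3 * q := by simp only [q, ENNReal.toReal_div]; norm_num; ring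
  have hq : 1 ≤ q := by linarith [ENNReal.toReal_mono hp₁top hp₁, ENNReal.toReal_ofNat 3]
  have ha : -1 < σ₁ * (3 * q) := by
    rw [ENNReal.toReal_div, ENNReal.toReal_one, hpq] at hσ₁
    have := mul_lt_mul_of_pos_right hσ₁ (by linarith : (0 : ℝ) < 3 * q)
    rwa [neg_mul, one_div_mul_cancel (by linarith)] at this
  rw [hpq, hσrel, show 3 * σ₁ * q = σ₁ * (3 * q) by ring]
  exact ⟨_, ENNReal.rpow_ne_top_of_nonneg (by positivity) ENNReal.ofReal_ne_top,
    fun f hf H hH hHol _ => rpow_le_rpow_mul_rpow_mul_of_le (by linarith)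
      (lintegral_rpow_abs_deriv_le hf hH hHol ha hq)⟩

/-- **One-dimensional weighted interpolation against the Hölder-1/2 seminorm**
(Lemma 2.20): for `p₁ ∈ [3,∞)`, `p₂ = p₁/3`, `σ₂ = 3σ₁`, `3/2 - 1/p₂ > σ₂` and
`σ₁ > -1/p₁`, one has
`‖x^{σ₁} f'‖_{L^{p₁}} ≤ C ‖f‖_{Ċ^{1/2}}^{2/3} ‖x^{σ₂} f''‖_{L^{p₂}}^{1/3}`,
where the Hölder seminorm is expressed through an arbitrary bound `H`. -/
theorem weighted_interpolation_holder_half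
    (p₁ : ℝ≥0∞) (σ₁ σ₂ : ℝ)
    (hp₁ : 3 ≤ p₁) (hp₁top : p₁ ≠ ⊤)
    (hσrel : σ₂ = 3 * σ₁)
    (hmain : σ₂ < 3 / 2 - (1 / (p₁ / 3)).toReal)
    (hσ₁ : -(1 / p₁).toReal < σ₁) :
    ∃ C : ℝ≥0∞, C ≠ ⊤ ∧ ∀ f : ℝ → ℝ, ContDiffOn ℝ 2 f (Set.Ioi 0) →
      ∀ H : ℝ, 0 ≤ H →
      (∀ x ∈ Set.Ioi (0:ℝ), ∀ y ∈ Set.Ioi (0:ℝ),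
        |f x - f y| ≤ H * Real.sqrt |x - y|) →
      wLp σ₂ (p₁ / 3) (deriv (deriv f)) < ⊤ →
      wLp σ₁ p₁ (deriv f)
        ≤ C * ENNReal.ofReal H ^ (2/3 : ℝ) *
            wLp σ₂ (p₁ / 3) (deriv (deriv f)) ^ (1/3 : ℝ) :=
  weighted_interpolation_holder_half_general p₁ σ₁ σ₂ hp₁ hp₁top hσrel hσ₁
end

section
/- Ungar-type inequality with a Hölder-1/2 lower-order term (Proposition 2.21): Let p₁ ∈ [3,∞) and p₂ = p₁/3. There is a constant C, depending only on the exponents, such that for every bounded interval I ⊂ ℝ of length λ > 0 and every u ∈ C²(I), ‖u′‖_{L^{p₁}(I)}^{p₁} ≤ C ( λ^{1+p₁−p₁/p₂} ‖u″‖_{L^{p₂}(I)}^{p₁} + λ^{−(1/2)(1+p₁−p₁/p₂)} ‖u‖_{Ċ^{1/2}(I)}^{p₁} ). -/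
/-!
The mean value theorem on the middle half of `I` and the Hölder bound give a point where
`|u'| ≤ H / √(λ/2)`; by the fundamental theorem of calculus,
`|u'| ≤ H / √(λ/2) + ‖u''‖_{L¹(I)}` everywhere on `I`. Integrating the `p₁`-th power over `I`
and estimating `‖u''‖_{L¹} ≤ λ^{1 - 1/p₂} ‖u''‖_{L^{p₂}}` by Hölder's inequality gives the claim.
-/

open MeasureTheory Set
open scoped ENNReal

theorem exists_abs_deriv_le_div_sqrt_of_holder {u : ℝ → ℝ} {c d H : ℝ} (hcd : c < d)
    (hu : ContinuousOn u (Icc c d)) (hu' : DifferentiableOn ℝ u (Ioo c d))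
    (hHol : |u d - u c| ≤ H * Real.sqrt (d - c)) :
    ∃ ξ ∈ Ioo c d, |deriv u ξ| ≤ H / Real.sqrt (d - c) := by
  obtain ⟨ξ, hξ, hslope⟩ := exists_deriv_eq_slope u hcd hu hu'
  have hlen : 0 < d - c := sub_pos.2 hcd
  refine ⟨ξ, hξ, ?_⟩
  rw [hslope, abs_div, abs_of_pos hlen, div_le_div_iff₀ hlen (Real.sqrt_pos.2 hlen)]
  calc |u d - u c| * Real.sqrt (d - c) ≤ H * Real.sqrt (d - c) * Real.sqrt (d - c) := by gcongr
    _ = H * (d - c) := by rw [mul_assoc, Real.mul_self_sqrt hlen.le]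

theorem enorm_sub_le_eLpNorm_deriv_one {E : Type*} [NormedAddCommGroup E] [NormedSpace ℝ E]
    {f : ℝ → E} {s : Set ℝ} (hs : s.OrdConnected) (hf : ContDiffOn ℝ 1 f s)
    {x y : ℝ} (hx : x ∈ s) (hy : y ∈ s) :
    ‖f y - f x‖ₑ ≤ eLpNorm (deriv f) 1 (volume.restrict s) := by
  rw [eLpNorm_one_eq_lintegral_enorm]
  wlog hxy : x ≤ y generalizing x y
  · rw [enorm_sub_rev]
    exact this hy hx (le_of_not_ge hxy)
  have hsub : Icc x y ⊆ s := hs.out hx hy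
  exact (enorm_sub_le_lintegral_deriv_of_contDiffOn_Icc (hf.mono hsub) hxy).trans
    (lintegral_mono_set hsub)

theorem enorm_deriv_le_of_holder {u : ℝ → ℝ} {a lam H : ℝ} (hlam : 0 < lam)
    (hu : ContDiffOn ℝ 2 u (Ioo a (a + lam)))
    (hHol : ∀ x ∈ Ioo a (a + lam), ∀ y ∈ Ioo a (a + lam),
      |u x - u y| ≤ H * Real.sqrt |x - y|)
    {x : ℝ} (hx : x ∈ Ioo a (a + lam)) :
    ‖deriv u x‖ₑ ≤ ENNReal.ofReal (H / Real.sqrt (lam / 2)) +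
      eLpNorm (deriv (deriv u)) 1 (volume.restrict (Ioo a (a + lam))) := by
  have hmid : Icc (a + lam / 4) (a + 3 * lam / 4) ⊆ Ioo a (a + lam) :=
    Icc_subset_Ioo (by linarith) (by linarith)
  have hc : a + lam / 4 ∈ Ioo a (a + lam) := hmid ⟨le_rfl, by linarith⟩
  have hd : a + 3 * lam / 4 ∈ Ioo a (a + lam) := hmid ⟨by linarith, le_rfl⟩
  have hlen : a + 3 * lam / 4 - (a + lam / 4) = lam / 2 := by ring
  obtain ⟨ξ, hξ, hξle⟩ := exists_abs_deriv_le_div_sqrt_of_holder (u := u) (by linarith)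
    (hu.continuousOn.mono hmid)
    ((hu.differentiableOn (by norm_num)).mono (Ioo_subset_Icc_self.trans hmid))
    (by simpa [hlen, abs_of_pos (half_pos hlam)] using hHol _ hd _ hc)
  rw [hlen] at hξle
  calc ‖deriv u x‖ₑ ≤ ‖deriv u ξ‖ₑ + ‖deriv u x - deriv u ξ‖ₑ := by
        simpa using enorm_add_le (deriv u ξ) (deriv u x - deriv u ξ)
    _ ≤ _ := by
        gcongr
        · rw [Real.enorm_eq_ofReal_abs]
          exact ENNReal.ofReal_le_ofReal hξle
        · exact enorm_sub_le_eLpNorm_deriv_one ordConnected_Ioo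
            (hu.deriv_of_isOpen isOpen_Ioo (by norm_num)) (hmid (Ioo_subset_Icc_self hξ)) hx

section

variable {α F : Type*} [MeasurableSpace α] {μ : Measure α} [NormedAddCommGroup F] {f : α → F}

theorem eLpNorm_rpow_le_of_ae_enorm_bound {p : ℝ≥0∞} (hp : p ≠ 0) (hp' : p ≠ ⊤)
    {C : ℝ≥0∞} (hfC : ∀ᵐ x ∂μ, ‖f x‖ₑ ≤ C) :
    eLpNorm f p μ ^ p.toReal ≤ μ univ * C ^ p.toReal := by
  have hp0 : 0 < p.toReal := ENNReal.toReal_pos hp hp'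
  calc eLpNorm f p μ ^ p.toReal ≤ (C * μ univ ^ p.toReal⁻¹) ^ p.toReal := by
        gcongr
        exact eLpNorm_le_of_ae_enorm_bound hfC
    _ = μ univ * C ^ p.toReal := by
        rw [ENNReal.mul_rpow_of_nonneg _ _ hp0.le, ← ENNReal.rpow_mul, inv_mul_cancel₀ hp0.ne',
          ENNReal.rpow_one, mul_comm]

theorem measure_univ_mul_eLpNorm_one_rpow_le (hf : AEStronglyMeasurable f μ) {q : ℝ≥0∞}
    (hq : 1 ≤ q) {p : ℝ} (hp : 0 ≤ p) :
    μ univ * eLpNorm f 1 μ ^ p ≤ μ univ ^ (1 + p - p / q.toReal) * eLpNorm f q μ ^ p := by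
  have hHolder := eLpNorm_le_eLpNorm_mul_rpow_measure_univ hq hf
  rw [ENNReal.toReal_one, div_one] at hHolder
  have hq' : 1 / q.toReal ≤ 1 := by
    rcases eq_or_ne q ⊤ with rfl | hqtop
    · simp
    · exact div_le_one_of_le₀ (ENNReal.toReal_one ▸ ENNReal.toReal_mono hqtop hq)
        ENNReal.toReal_nonneg
  calc μ univ * eLpNorm f 1 μ ^ p
      ≤ μ univ * (eLpNorm f q μ * μ univ ^ (1 - 1 / q.toReal)) ^ p := by gcongr
    _ = μ univ ^ (1 + (1 - 1 / q.toReal) * p) * eLpNorm f q μ ^ p := by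
        rw [ENNReal.rpow_add_of_nonneg _ _ zero_le_one (mul_nonneg (sub_nonneg.2 hq') hp),
          ENNReal.mul_rpow_of_nonneg _ _ hp, ← ENNReal.rpow_mul, ENNReal.rpow_one]
        ring
    _ = μ univ ^ (1 + p - p / q.toReal) * eLpNorm f q μ ^ p := by ring_nf

end

theorem ofReal_mul_ofReal_div_sqrt_half_rpow {lam : ℝ} (hlam : 0 < lam) (H : ℝ) {p : ℝ}
    (hp : 0 ≤ p) :
    ENNReal.ofReal lam * ENNReal.ofReal (H / Real.sqrt (lam / 2)) ^ p
      = 2 ^ (p / 2) * (ENNReal.ofReal (lam ^ (1 - p / 2)) * ENNReal.ofReal H ^ p) := by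
  have hl2 : 0 < lam / 2 := half_pos hlam
  have hreal : lam * (lam / 2) ^ (-(1 / 2) * p) = 2 ^ (p / 2) * lam ^ (1 - p / 2) := by
    rw [Real.div_rpow hlam.le zero_le_two, show 1 - p / 2 = 1 + -(1 / 2) * p by ring,
      Real.rpow_add hlam, Real.rpow_one, show p / 2 = -(-(1 / 2) * p) by ring,
      Real.rpow_neg zero_le_two]
    ring
  rw [Real.sqrt_eq_rpow, div_eq_mul_inv, ← Real.rpow_neg hl2.le,
    ENNReal.ofReal_mul' (Real.rpow_nonneg hl2.le _), ENNReal.mul_rpow_of_nonneg _ _ hp,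
    ENNReal.ofReal_rpow_of_pos (Real.rpow_pos_of_pos hl2 _), ← Real.rpow_mul hl2.le]
  calc ENNReal.ofReal lam * (ENNReal.ofReal H ^ p * ENNReal.ofReal ((lam / 2) ^ (-(1 / 2) * p)))
      = ENNReal.ofReal (lam * (lam / 2) ^ (-(1 / 2) * p)) * ENNReal.ofReal H ^ p := by
        rw [ENNReal.ofReal_mul hlam.le]; ring
    _ = _ := by
        rw [hreal, ENNReal.ofReal_mul (by positivity), ← ENNReal.ofReal_rpow_of_pos two_pos,
          ENNReal.ofReal_ofNat, mul_assoc]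

/-- **Ungar-type inequality with a Hölder-1/2 lower-order term** (Proposition 2.21):
for `p₁ ∈ [3,∞)` and `p₂ = p₁/3`, there is a constant `C` such that for every bounded
interval `I` of length `λ > 0` and every `u ∈ C²(I)`,
`‖u'‖_{L^{p₁}(I)}^{p₁} ≤ C (λ^{1+p₁-p₁/p₂} ‖u''‖_{L^{p₂}(I)}^{p₁}
  + λ^{-(1/2)(1+p₁-p₁/p₂)} ‖u‖_{Ċ^{1/2}(I)}^{p₁})`,
the Hölder seminorm being expressed through an arbitrary bound `H`. -/
theorem ungar_interpolation_holder
    (p₁ : ℝ≥0∞) (hp₁ : 3 ≤ p₁) (hp₁top : p₁ ≠ ⊤) :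
    ∃ C : ℝ≥0∞, C ≠ ⊤ ∧ ∀ (a lam : ℝ), 0 < lam → ∀ u : ℝ → ℝ,
      ContDiffOn ℝ 2 u (Set.Ioo a (a + lam)) →
      ∀ H : ℝ, 0 ≤ H →
      (∀ x ∈ Set.Ioo a (a + lam), ∀ y ∈ Set.Ioo a (a + lam),
        |u x - u y| ≤ H * Real.sqrt |x - y|) →
      eLpNorm (deriv u) p₁ (volume.restrict (Set.Ioo a (a + lam))) ^ p₁.toReal
        ≤ C * (ENNReal.ofReal (lam ^ (1 + p₁.toReal - p₁.toReal / (p₁ / 3).toReal)) *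
                eLpNorm (deriv (deriv u)) (p₁ / 3)
                  (volume.restrict (Set.Ioo a (a + lam))) ^ p₁.toReal
              + ENNReal.ofReal (lam ^ (-(1/2 : ℝ) * (1 + p₁.toReal - p₁.toReal / (p₁ / 3).toReal))) *
                ENNReal.ofReal H ^ p₁.toReal) := by
  set p := p₁.toReal
  have hp : 3 ≤ p := by simpa using (ENNReal.toReal_le_toReal (by simp) hp₁top).2 hp₁
  have hq : 1 ≤ p₁ / 3 := by
    rwa [ENNReal.le_div_iff_mul_le (by simp) (by simp), one_mul]
  have hexp : -(1 / 2 : ℝ) * (1 + p - p / (p₁ / 3).toReal) = 1 - p / 2 := by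
    rw [show (p₁ / 3).toReal = p / 3 by simp [p, ENNReal.toReal_div]]
    field_simp
    ring
  refine ⟨2 ^ (p - 1) * 2 ^ (p / 2), by finiteness, ?_⟩
  intro a lam hlam u hu H _ hHol
  set μ := volume.restrict (Ioo a (a + lam))
  set X := ENNReal.ofReal (H / Real.sqrt (lam / 2))
  set N := eLpNorm (deriv (deriv u)) 1 μ
  set E := eLpNorm (deriv (deriv u)) (p₁ / 3) μ
  have hμ : μ univ = ENNReal.ofReal lam := by simp [μ]
  have hLp : eLpNorm (deriv u) p₁ μ ^ p ≤ ENNReal.ofReal lam * (X + N) ^ p := hμ ▸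
    eLpNorm_rpow_le_of_ae_enorm_bound (by positivity) hp₁top
      (ae_restrict_of_forall_mem measurableSet_Ioo fun _ hx =>
        enorm_deriv_le_of_holder hlam hu hHol hx)
  have hL1 := measure_univ_mul_eLpNorm_one_rpow_le (μ := μ)
    (measurable_deriv (deriv u)).aestronglyMeasurable hq (p := p) (by linarith)
  rw [hμ, ENNReal.ofReal_rpow_of_pos hlam] at hL1
  have h2 : (1 : ℝ≥0∞) ≤ 2 ^ (p / 2) := ENNReal.one_le_rpow (by norm_num) (by linarith)
  rw [hexp]
  calc _ ≤ ENNReal.ofReal lam * (2 ^ (p - 1) * (X ^ p + N ^ p)) := by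
        grw [hLp, ENNReal.rpow_add_le_mul_rpow_add_rpow _ _ (by linarith)]
    _ = 2 ^ (p - 1) * (ENNReal.ofReal lam * X ^ p + ENNReal.ofReal lam * N ^ p) := by ring
    _ ≤ 2 ^ (p - 1) * (2 ^ (p / 2) * (ENNReal.ofReal (lam ^ (1 - p / 2)) * ENNReal.ofReal H ^ p)
          + 2 ^ (p / 2) * (ENNReal.ofReal (lam ^ (1 + p - p / (p₁ / 3).toReal)) * E ^ p)) := by
        rw [ofReal_mul_ofReal_div_sqrt_half_rpow hlam H (by linarith)]
        gcongr 2 ^ (p - 1) * (_ + ?_)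
        exact hL1.trans (le_mul_of_one_le_left' h2)
    _ = _ := by ring
end
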